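/- arXiv:1211.3269 — 7 statements merged into one kernel-verified Lean document; each statement's English description precedes it below -/
import Mathlib

section
/- Let n ≥ 2 and s ≥ 1 be integers and let a = (a_1, …, a_n) ∈ ℤ^n be a primitive vector with all entries positive. Let S_a = {x ∈ ℝ^{n−1} : x ≥ 0 componentwise, a_1 x_1 + ⋯ + a_{n−1} x_{n−1} ≤ 1} and let L_a = {z ∈ ℤ^{n−1} : a_1 z_1 + ⋯ + a_{n−1} z_{n−1} ≡ 0 (mod a_n)}. Then μ_s(S_a, L_a) = F_s(a) + a_1 + ⋯ + a_n. -/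
open scoped BigOperators
open Matrix

noncomputable section

/-- The real matrix obtained from an integer matrix. -/
def Rmat {m n : ℕ} (A : Matrix (Fin m) (Fin n) ℤ) : Matrix (Fin m) (Fin n) ℝ :=
  A.map (Int.cast : ℤ → ℝ)

/-- The real vector obtained from an integer vector. -/
def Rvec {m : ℕ} (b : Fin m → ℤ) : Fin m → ℝ := fun i => (b i : ℝ)

/-- The knapsack polytope P(A,b) = {x ≥ 0 : A x = b}. -/
def knap {m n : ℕ} (A : Matrix (Fin m) (Fin n) ℤ) (b : Fin m → ℝ) : Set (Fin n → ℝ) :=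
  {x | (∀ i, 0 ≤ x i) ∧ (Rmat A).mulVec x = b}

/-- The set F_s(A) of integer vectors b for which P(A,b) contains at least s integer points. -/
def feas {m n : ℕ} (s : ℕ) (A : Matrix (Fin m) (Fin n) ℤ) : Set (Fin m → ℤ) :=
  {b | s ≤ Set.ncard {x : Fin n → ℤ | (∀ i, 0 ≤ x i) ∧ A.mulVec x = b}}

/-- The cone generated by the columns of A. -/
def coneOf {m n : ℕ} (A : Matrix (Fin m) (Fin n) ℤ) : Set (Fin m → ℝ) :=
  {y | ∃ x : Fin n → ℝ, (∀ i, 0 ≤ x i) ∧ (Rmat A).mulVec x = y}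

/-- The generalized diagonal s-Frobenius number g_s(A, w). -/
def gDiag {m n : ℕ} (s : ℕ) (A : Matrix (Fin m) (Fin n) ℤ) (w : Fin m → ℝ) : ℝ :=
  sInf {t : ℝ | 0 ≤ t ∧
    ∀ b : Fin m → ℤ, Rvec b ∈ interior ((fun c => t • w + c) '' coneOf A) → b ∈ feas s A}

/-- v = A·1 is the sum of the columns of A (as a real vector). -/
def vA {m n : ℕ} (A : Matrix (Fin m) (Fin n) ℤ) : Fin m → ℝ :=
  (Rmat A).mulVec (fun _ => 1)

/-- The diagonal s-Frobenius number g_s(A) = g_s(A, A·1). -/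
def gFrob {m n : ℕ} (s : ℕ) (A : Matrix (Fin m) (Fin n) ℤ) : ℝ := gDiag s A (vA A)

/-- The regularity assumptions: the m×m minors of A have gcd 1, and the only
nonnegative real solution of A x = 0 is x = 0. -/
def regular {m n : ℕ} (A : Matrix (Fin m) (Fin n) ℤ) : Prop :=
  Finset.univ.gcd (fun I : Fin m ↪ Fin n => (A.submatrix id ⇑I).det) = 1 ∧
  ∀ x : Fin n → ℝ, (∀ i, 0 ≤ x i) → (Rmat A).mulVec x = 0 → x = 0

/-- The s-covering radius of K with respect to L: the smallest μ > 0 such that every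
point of the real span of L lies in y + μK for at least s distinct y ∈ L. -/
def muCov {N : ℕ} (s : ℕ) (K L : Set (Fin N → ℝ)) : ℝ :=
  sInf {μ : ℝ | 0 < μ ∧ ∀ x ∈ Submodule.span ℝ L,
    ∃ T : Finset (Fin N → ℝ), ↑T ⊆ L ∧ s ≤ T.card ∧ ∀ y ∈ T, ∃ k ∈ K, x = y + μ • k}

/-- The set of absolute values of m×m minors of A. -/
def minorAbs {m n : ℕ} (A : Matrix (Fin m) (Fin n) ℤ) : Set ℤ :=
  {d | ∃ I : Fin m ↪ Fin n, d = |(A.submatrix id ⇑I).det|}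

/-- m(A): the minimal absolute m×m minor of A. -/
def mMin {m n : ℕ} (A : Matrix (Fin m) (Fin n) ℤ) : ℤ := sInf (minorAbs A)

/-- M(A): the maximal absolute m×m minor of A. -/
def mMax {m n : ℕ} (A : Matrix (Fin m) (Fin n) ℤ) : ℤ := sSup (minorAbs A)

/-- The lattice L_A^⊥ = {z ∈ ℤ^n : A z = 0}, viewed as a subset of ℝ^n. -/
def kerLat {m n : ℕ} (A : Matrix (Fin m) (Fin n) ℤ) : Set (Fin n → ℝ) :=
  {x | ∃ z : Fin n → ℤ, A.mulVec z = 0 ∧ x = Rvec z}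

/-- √(det (A Aᵀ)). -/
def sqrtDet {m n : ℕ} (A : Matrix (Fin m) (Fin n) ℤ) : ℝ :=
  Real.sqrt (((A * Aᵀ).det : ℤ) : ℝ)

/-- The s-Frobenius number of a positive primitive integer vector. -/
def sFrob {n : ℕ} (s : ℕ) (a : Fin n → ℤ) : ℤ :=
  sSup {b : ℤ | Set.ncard {x : Fin n → ℤ | (∀ i, 0 ≤ x i) ∧ ∑ i, a i * x i = b} < s}

/-- The full-rank lattice in ℝ^d with basis the columns of an invertible matrix B. -/
def latSet {d : ℕ} (B : Matrix (Fin d) (Fin d) ℝ) : Set (Fin d → ℝ) :=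
  {x | ∃ z : Fin d → ℤ, x = B.mulVec (fun i => (z i : ℝ))}

/-- The absolute s-inhomogeneous minimum ϑ_s(K) = inf_L μ_s(K,L)/det(L)^{1/d}. -/
def theta (s d : ℕ) (K : Set (Fin d → ℝ)) : ℝ :=
  sInf {r : ℝ | ∃ B : Matrix (Fin d) (Fin d) ℝ, B.det ≠ 0 ∧
    r = muCov s K (latSet B) / |B.det| ^ ((1 : ℝ) / d)}

/-- The standard simplex S_d ⊂ ℝ^d. -/
def stdSimplex' (d : ℕ) : Set (Fin d → ℝ) :=
  {x | (∀ i, 0 ≤ x i) ∧ ∑ i, x i ≤ 1}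

/-!
Write `a' = (a₁, …, a_{n-1})`. For `c ∈ ℤ^{n-1}` and `b ∈ ℤ` with `a' ⬝ c ≡ b (mod aₙ)`, the map
`w ↦ c - (w₁, …, w_{n-1})` is a bijection from the nonnegative solutions of `a ⬝ w = b` onto the
points of `L_a` in `c - b • S_a`, and `x ∈ y + μ • S_a` means `y ≤ x` and `a' ⬝ (x - y) ≤ μ`.
If `μ ≥ F_s(a) + a₁ + ⋯ + aₙ`, take `c = ⌊x⌋` and `b ∈ (F_s(a), F_s(a) + aₙ]` in the residue class
of `a' ⬝ c`: the `≥ s` solutions for `b` give `s` lattice points covering `x`. If `μ` is smaller,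
take `x = c + (1 - ε) 𝟙` with `a' ⬝ c ≡ F_s(a)`: the lattice points covering `x` lie in
`c - F_s(a) • S_a`, so there are fewer than `s` of them.
-/

def solSet {n : ℕ} (a : Fin n → ℤ) (b : ℤ) : Set (Fin n → ℤ) :=
  {x | (∀ i, 0 ≤ x i) ∧ ∑ i, a i * x i = b}

section Representations

variable {n : ℕ} {a : Fin n → ℤ}

lemma solSet_finite (hpos : ∀ i, 0 < a i) (b : ℤ) : (solSet a b).Finite := by
  refine (Set.finite_Icc (0 : Fin n → ℤ) (fun _ => b)).subset fun x ⟨hx0, hxb⟩ => ⟨hx0, fun i => ?_⟩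
  calc x i ≤ a i * x i := le_mul_of_one_le_left (hx0 i) (hpos i)
    _ ≤ b := hxb ▸ Finset.single_le_sum (f := fun j => a j * x j)
          (fun j _ => mul_nonneg (hpos j).le (hx0 j)) (Finset.mem_univ i)

lemma solSet_eq_empty_of_neg (hpos : ∀ i, 0 < a i) {b : ℤ} (hb : b < 0) : solSet a b = ∅ :=
  Set.eq_empty_of_forall_notMem fun _ ⟨hx0, hxb⟩ =>
    hb.not_ge (hxb ▸ Finset.sum_nonneg fun i _ => mul_nonneg (hpos i).le (hx0 i))

lemma solSet_nonempty_of_ge (hpos : ∀ i, 0 < a i) (hprim : Finset.univ.gcd a = 1) (i₀ : Fin n)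
    {b : ℤ} (hb : ∑ i, a i * a i₀ ≤ b) : (solSet a b).Nonempty := by
  obtain ⟨u, hu⟩ := Finset.gcd_eq_sum_mul Finset.univ a
  rw [hprim] at hu
  -- reduce the Bézout solution `b • u` modulo `a i₀`, then fill up the coordinate `i₀`
  set y : Fin n → ℤ := fun i => b * u i % a i₀
  have hy0 : ∀ i, 0 ≤ y i := fun i => Int.emod_nonneg _ (hpos i₀).ne'
  have hdvd : a i₀ ∣ b - ∑ i, a i * y i := by
    have : ∑ i, a i * (b * u i - y i) = b * ∑ i, a i * u i - ∑ i, a i * y i := by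
      rw [Finset.mul_sum, ← Finset.sum_sub_distrib]
      exact Finset.sum_congr rfl fun i _ => by ring
    rw [← hu, mul_one] at this
    rw [← this]
    exact Finset.dvd_sum fun i _ => (Int.dvd_self_sub_of_emod_eq rfl).mul_left _
  obtain ⟨q, hq⟩ := hdvd
  have hyb : ∑ i, a i * y i ≤ b := hb.trans' <| Finset.sum_le_sum fun i _ =>
    mul_le_mul_of_nonneg_left (Int.emod_lt_of_pos _ (hpos i₀)).le (hpos i).le
  have hq0 : 0 ≤ q := nonneg_of_mul_nonneg_right (hq ▸ sub_nonneg.2 hyb) (hpos i₀)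
  refine ⟨y + Pi.single i₀ q, fun i => ?_, ?_⟩
  · by_cases hi : i = i₀
    · subst hi; simpa using add_nonneg (hy0 i) hq0
    · simpa [hi] using hy0 i
  · simp only [Pi.add_apply, mul_add, Finset.sum_add_distrib, Pi.single_apply, mul_ite, mul_zero,
      Finset.sum_ite_eq', Finset.mem_univ, if_true]
    linarith

lemma le_ncard_solSet_add (hpos : ∀ i, 0 < a i) {c : ℤ} {x : Fin n → ℤ} (hx : x ∈ solSet a c)
    {i₀ i₁ : Fin n} (hi : i₀ ≠ i₁) (s : ℕ) :
    s ≤ (solSet a (c + s * (a i₀ * a i₁))).ncard := by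
  -- move along the kernel vector `a i₁ • e i₀ - a i₀ • e i₁`
  set f : ℕ → Fin n → ℤ := fun k =>
    x + Pi.single i₀ (k * a i₁) + Pi.single i₁ ((s - k : ℤ) * a i₀)
  have hf : ∀ k ∈ (Finset.range s : Set ℕ), f k ∈ solSet a (c + s * (a i₀ * a i₁)) := by
    intro k hk
    have hks : (k : ℤ) ≤ s := by exact_mod_cast (Finset.mem_range.1 hk).le
    refine ⟨fun i => ?_, ?_⟩
    · simp only [f, Pi.add_apply, Pi.single_apply]
      have h₀ : 0 ≤ (k : ℤ) * a i₁ := mul_nonneg k.cast_nonneg (hpos i₁).le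
      have h₁ : 0 ≤ (s - k : ℤ) * a i₀ := mul_nonneg (sub_nonneg.2 hks) (hpos i₀).le
      have := hx.1 i
      split_ifs <;> linarith
    · simp only [f, Pi.add_apply, mul_add, Finset.sum_add_distrib, Pi.single_apply, mul_ite,
        mul_zero, Finset.sum_ite_eq', Finset.mem_univ, if_true, hx.2]
      ring
  have hinj : Set.InjOn f (Finset.range s) := fun k _ k' _ h => by
    have := congrFun h i₀
    simp only [f, Pi.add_apply, Pi.single_eq_same, Pi.single_eq_of_ne hi] at this
    exact_mod_cast mul_right_cancel₀ (hpos i₁).ne' (by linarith : (k : ℤ) * a i₁ = k' * a i₁)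
  simpa using Set.ncard_le_ncard_of_injOn f hf hinj (solSet_finite hpos _)

lemma bddAbove_setOf_ncard_solSet_lt (hpos : ∀ i, 0 < a i) (hprim : Finset.univ.gcd a = 1)
    (hn : 2 ≤ n) (s : ℕ) : BddAbove {b | (solSet a b).ncard < s} := by
  set i₀ : Fin n := ⟨0, by omega⟩
  set i₁ : Fin n := ⟨1, by omega⟩
  refine ⟨∑ i, a i * a i₀ + s * (a i₀ * a i₁), fun b hb => ?_⟩
  by_contra! hlt
  obtain ⟨x, hx⟩ := solSet_nonempty_of_ge hpos hprim i₀
    (le_sub_iff_add_le.2 hlt.le : ∑ i, a i * a i₀ ≤ b - s * (a i₀ * a i₁))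
  have := le_ncard_solSet_add hpos hx (by simp [i₀, i₁, Fin.ext_iff] : i₀ ≠ i₁) s
  rw [sub_add_cancel] at this
  exact this.not_gt hb

lemma ncard_solSet_sFrob_lt (hpos : ∀ i, 0 < a i) (hprim : Finset.univ.gcd a = 1) (hn : 2 ≤ n)
    {s : ℕ} (hs : 1 ≤ s) : (solSet a (sFrob s a)).ncard < s :=
  Int.csSup_mem ⟨-1, by simp [solSet_eq_empty_of_neg hpos]; omega⟩
    (bddAbove_setOf_ncard_solSet_lt hpos hprim hn s)

lemma neg_one_le_sFrob (hpos : ∀ i, 0 < a i) (hprim : Finset.univ.gcd a = 1) (hn : 2 ≤ n)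
    {s : ℕ} (hs : 1 ≤ s) : -1 ≤ sFrob s a :=
  le_csSup (bddAbove_setOf_ncard_solSet_lt hpos hprim hn s)
    (by simp [solSet_eq_empty_of_neg hpos]; omega : (solSet a (-1)).ncard < s)

lemma le_ncard_solSet_of_sFrob_lt (hpos : ∀ i, 0 < a i) (hprim : Finset.univ.gcd a = 1)
    (hn : 2 ≤ n) {s : ℕ} {b : ℤ} (hb : sFrob s a < b) : s ≤ (solSet a b).ncard :=
  not_lt.1 fun h => hb.not_ge (le_csSup (bddAbove_setOf_ncard_solSet_lt hpos hprim hn s) h)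

end Representations

lemma rvec_injective {m : ℕ} : Function.Injective (Rvec (m := m)) :=
  fun _ _ h => funext fun i => Int.cast_injective (congrFun h i)

section Knapsack

variable {d : ℕ} (a : Fin (d + 1) → ℤ)

def knapsackSimplex : Set (Fin d → ℝ) :=
  {x | (∀ i, 0 ≤ x i) ∧ ∑ i, (a (Fin.castSucc i) : ℝ) * x i ≤ 1}

def knapsackLattice : Set (Fin d → ℝ) :=
  {x | ∃ z : Fin d → ℤ, x = Rvec z ∧ a (Fin.last d) ∣ ∑ i, a (Fin.castSucc i) * z i}

/-- The integer points of `L_a` in `c - b • S_a` (for `b ≥ 0`). -/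
def latticePtsBelow (c : Fin d → ℤ) (b : ℤ) : Set (Fin d → ℤ) :=
  {z | z ≤ c ∧ a (Fin.last d) ∣ ∑ i, a (Fin.castSucc i) * z i ∧
    ∑ i, a (Fin.castSucc i) * (c i - z i) ≤ b}

lemma exists_mem_knapsackSimplex_iff {μ : ℝ} (hμ : 0 < μ) (x y : Fin d → ℝ) :
    (∃ k ∈ knapsackSimplex a, x = y + μ • k) ↔
      y ≤ x ∧ ∑ i, (a (Fin.castSucc i) : ℝ) * (x i - y i) ≤ μ := by
  constructor
  · rintro ⟨k, ⟨hk0, hk1⟩, rfl⟩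
    refine ⟨fun i => by simpa using mul_nonneg hμ.le (hk0 i), ?_⟩
    simpa [← Finset.mul_sum, mul_left_comm _ μ] using mul_le_mul_of_nonneg_left hk1 hμ.le
  · rintro ⟨hyx, hsum⟩
    refine ⟨μ⁻¹ • (x - y), ⟨fun i => ?_, ?_⟩, ?_⟩
    · simpa using mul_nonneg (inv_nonneg.2 hμ.le) (sub_nonneg.2 (hyx i))
    · simpa [mul_left_comm _ μ⁻¹, ← Finset.mul_sum, inv_mul_le_one₀ hμ] using hsum
    · rw [smul_smul, mul_inv_cancel₀ hμ.ne', one_smul, add_sub_cancel]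

lemma span_knapsackLattice (hN : a (Fin.last d) ≠ 0) :
    Submodule.span ℝ (knapsackLattice a) = ⊤ := by
  rw [eq_top_iff, ← (Pi.basisFun ℝ (Fin d)).span_eq, Submodule.span_le]
  rintro _ ⟨i, rfl⟩
  have hmem : Pi.single i (a (Fin.last d) : ℝ) ∈ knapsackLattice a := by
    refine ⟨Pi.single i (a (Fin.last d)), ?_, ?_⟩
    · ext j
      by_cases hj : j = i
      · subst hj; simp [Rvec]
      · simp [Rvec, hj]
    · simp [Pi.single_apply]
  have : Pi.basisFun ℝ (Fin d) i = (a (Fin.last d) : ℝ)⁻¹ • Pi.single i (a (Fin.last d) : ℝ) := by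
    rw [Pi.basisFun_apply, ← Pi.single_smul', smul_eq_mul,
      inv_mul_cancel₀ (Int.cast_ne_zero.2 hN)]
  rw [this]
  exact Submodule.smul_mem _ _ (Submodule.subset_span hmem)

end Knapsack

section Correspondence

variable {d : ℕ} {a : Fin (d + 1) → ℤ}

lemma injOn_sub_init_solSet (hN : a (Fin.last d) ≠ 0) (c : Fin d → ℤ) (b : ℤ) :
    Set.InjOn (fun w => c - Fin.init w) (solSet a b) := by
  intro w hw w' hw' h
  have hinit : Fin.init w = Fin.init w' := sub_right_injective h
  have hlast : w (Fin.last d) = w' (Fin.last d) := by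
    have e := hw.2.trans hw'.2.symm
    rw [Fin.sum_univ_castSucc, Fin.sum_univ_castSucc] at e
    simp only [show ∀ i, w (Fin.castSucc i) = w' (Fin.castSucc i) from congrFun hinit,
      add_right_inj] at e
    exact mul_left_cancel₀ hN e
  rw [← Fin.snoc_init_self w, ← Fin.snoc_init_self w', hinit, hlast]

lemma image_sub_init_solSet (hN : 0 < a (Fin.last d)) {c : Fin d → ℤ} {b : ℤ}
    (hc : a (Fin.last d) ∣ ∑ i, a (Fin.castSucc i) * c i - b) :
    (fun w => c - Fin.init w) '' solSet a b = latticePtsBelow a c b := by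
  ext z
  constructor
  · rintro ⟨w, ⟨hw0, hwb⟩, rfl⟩
    rw [Fin.sum_univ_castSucc] at hwb
    refine ⟨fun i => sub_le_self _ (hw0 _), ?_, ?_⟩
    · have : ∑ i, a (Fin.castSucc i) * (c - Fin.init w) i
          = (∑ i, a (Fin.castSucc i) * c i - b) + a (Fin.last d) * w (Fin.last d) := by
        simp only [Pi.sub_apply, mul_sub, Finset.sum_sub_distrib, Fin.init]
        linarith
      rw [this]
      exact dvd_add hc (dvd_mul_right _ _)
    · simp only [Pi.sub_apply, sub_sub_cancel, Fin.init]
      linarith [mul_nonneg hN.le (hw0 (Fin.last d))]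
  · rintro ⟨hzc, hzL, hzb⟩
    obtain ⟨m, hm⟩ : a (Fin.last d) ∣ b - ∑ i, a (Fin.castSucc i) * (c i - z i) := by
      have : b - ∑ i, a (Fin.castSucc i) * (c i - z i)
          = ∑ i, a (Fin.castSucc i) * z i - (∑ i, a (Fin.castSucc i) * c i - b) := by
        simp only [mul_sub, Finset.sum_sub_distrib]
        ring
      rw [this]
      exact dvd_sub hzL hc
    have hm0 : 0 ≤ m := nonneg_of_mul_nonneg_right (hm ▸ sub_nonneg.2 hzb) hN
    refine ⟨Fin.snoc (c - z) m, ⟨fun i => ?_, ?_⟩, ?_⟩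
    · cases i using Fin.lastCases with
      | last => simpa using hm0
      | cast i => simpa using hzc i
    · rw [Fin.sum_univ_castSucc]
      simp only [Fin.snoc_castSucc, Fin.snoc_last, Pi.sub_apply]
      linarith
    · simp [Fin.init_snoc]

lemma latticePtsBelow_finite (hpos : ∀ i, 0 < a i) {c : Fin d → ℤ} {b : ℤ}
    (hc : a (Fin.last d) ∣ ∑ i, a (Fin.castSucc i) * c i - b) :
    (latticePtsBelow a c b).Finite :=
  image_sub_init_solSet (hpos _) hc ▸ (solSet_finite hpos b).image _

lemma ncard_latticePtsBelow (hpos : ∀ i, 0 < a i) {c : Fin d → ℤ} {b : ℤ}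
    (hc : a (Fin.last d) ∣ ∑ i, a (Fin.castSucc i) * c i - b) :
    (latticePtsBelow a c b).ncard = (solSet a b).ncard := by
  rw [← image_sub_init_solSet (hpos _) hc, (injOn_sub_init_solSet (hpos _).ne' c b).ncard_image]

end Correspondence

def IsCovering {N : ℕ} (s : ℕ) (K L : Set (Fin N → ℝ)) (μ : ℝ) : Prop :=
  ∀ x, ∃ T : Finset (Fin N → ℝ), ↑T ⊆ L ∧ s ≤ T.card ∧ ∀ y ∈ T, ∃ k ∈ K, x = y + μ • k

lemma muCov_eq_of_span_eq_top {N s : ℕ} {K L : Set (Fin N → ℝ)}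
    (hL : Submodule.span ℝ L = ⊤) {v : ℝ} (h : ∀ μ, 0 < μ ∧ IsCovering s K L μ ↔ v ≤ μ) :
    muCov s K L = v := by
  have : {μ : ℝ | 0 < μ ∧ ∀ x ∈ Submodule.span ℝ L, ∃ T : Finset (Fin N → ℝ),
      ↑T ⊆ L ∧ s ≤ T.card ∧ ∀ y ∈ T, ∃ k ∈ K, x = y + μ • k} = Set.Ici v := by
    ext μ
    simpa [hL, IsCovering] using h μ
  rw [muCov, this, csInf_Ici]

lemma exists_dvd_sub_of_lt_of_le {N : ℤ} (hN : 0 < N) (F r : ℤ) :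
    ∃ b, F < b ∧ b ≤ F + N ∧ N ∣ r - b := by
  refine ⟨F + 1 + (r - F - 1) % N, ?_, ?_, (r - F - 1) / N, ?_⟩
  · linarith [Int.emod_nonneg (r - F - 1) hN.ne']
  · linarith [Int.emod_lt_of_pos (r - F - 1) hN]
  · rw [Int.emod_def]
    ring

lemma le_of_dvd_sub_of_lt_add {N F W : ℤ} (h : N ∣ F - W) (hW : W < F + N) : W ≤ F := by
  by_contra! hFW
  have := Int.eq_zero_of_abs_lt_dvd h (by rw [abs_of_neg (by linarith)]; linarith)
  linarith

section Covering

variable {d : ℕ} {a : Fin (d + 1) → ℤ}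

lemma exists_dvd_sum_castSucc_sub (hprim : Finset.univ.gcd a = 1) (b : ℤ) :
    ∃ c : Fin d → ℤ, a (Fin.last d) ∣ ∑ i, a (Fin.castSucc i) * c i - b := by
  obtain ⟨u, hu⟩ := Finset.gcd_eq_sum_mul Finset.univ a
  rw [hprim, Fin.sum_univ_castSucc] at hu
  refine ⟨fun i => b * u (Fin.castSucc i), -(b * u (Fin.last d)), ?_⟩
  have : ∑ i, a (Fin.castSucc i) * (b * u (Fin.castSucc i))
      = b * ∑ i, a (Fin.castSucc i) * u (Fin.castSucc i) := by
    rw [Finset.mul_sum]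
    exact Finset.sum_congr rfl fun i _ => by ring
  rw [this]
  linear_combination -b * hu

lemma isCovering_of_le (hpos : ∀ i, 0 < a i) {s : ℕ} {F : ℤ}
    (hF : ∀ b, F < b → s ≤ (solSet a b).ncard) {μ : ℝ} (hμ0 : 0 < μ)
    (hμ : F + ∑ i, (a i : ℝ) ≤ μ) :
    IsCovering s (knapsackSimplex a) (knapsackLattice a) μ := by
  intro x
  set c : Fin d → ℤ := fun i => ⌊x i⌋
  obtain ⟨b, hFb, hbF, hc⟩ :=
    exists_dvd_sub_of_lt_of_le (hpos (Fin.last d)) F (∑ i, a (Fin.castSucc i) * c i)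
  have hfin := latticePtsBelow_finite hpos hc
  refine ⟨hfin.toFinset.image Rvec, ?_, ?_, ?_⟩
  · intro y hy
    simp only [Finset.coe_image, Set.Finite.coe_toFinset] at hy
    obtain ⟨z, hz, rfl⟩ := hy
    exact ⟨z, rfl, hz.2.1⟩
  · rw [Finset.card_image_of_injective _ rvec_injective, ← Set.ncard_eq_toFinset_card _ hfin,
      ncard_latticePtsBelow hpos hc]
    exact hF b hFb
  · intro y hy
    simp only [Finset.mem_image, Set.Finite.mem_toFinset] at hy
    obtain ⟨z, ⟨hzc, -, hzb⟩, rfl⟩ := hy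
    rw [exists_mem_knapsackSimplex_iff a hμ0]
    refine ⟨fun i => (Int.cast_le.2 (hzc i)).trans (Int.floor_le (x i)), ?_⟩
    have hfrac : ∀ i, x i - c i ≤ 1 := fun i => by linarith [Int.lt_floor_add_one (x i)]
    have hsplit := Fin.sum_univ_castSucc fun i => (a i : ℝ)
    calc ∑ i, (a (Fin.castSucc i) : ℝ) * (x i - Rvec z i)
        = ∑ i, (a (Fin.castSucc i) : ℝ) * (x i - c i)
          + ((∑ i, a (Fin.castSucc i) * (c i - z i) : ℤ) : ℝ) := by
          push_cast
          rw [← Finset.sum_add_distrib]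
          exact Finset.sum_congr rfl fun i _ => by simp only [Rvec]; ring
      _ ≤ ∑ i, (a (Fin.castSucc i) : ℝ) + b := by
          gcongr with i
          exact mul_le_of_le_one_right (by exact_mod_cast (hpos _).le) (hfrac i)
      _ ≤ μ := by
          have : (b : ℝ) ≤ F + a (Fin.last d) := by exact_mod_cast hbF
          linarith

lemma mem_image_rvec_latticePtsBelow {F : ℤ} {c : Fin d → ℤ}
    (hc : a (Fin.last d) ∣ ∑ i, a (Fin.castSucc i) * c i - F) {μ ε : ℝ} (hμ0 : 0 < μ)
    (hε : 0 < ε) (hεA : μ + ε * ∑ i, (a (Fin.castSucc i) : ℝ) < F + ∑ i, (a i : ℝ))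
    {y : Fin d → ℝ} (hyL : y ∈ knapsackLattice a)
    (hy : ∃ k ∈ knapsackSimplex a, (fun i => c i + 1 - ε) = y + μ • k) :
    y ∈ Rvec '' latticePtsBelow a c F := by
  obtain ⟨z, rfl, hzL⟩ := hyL
  obtain ⟨hzx, hsum⟩ := (exists_mem_knapsackSimplex_iff a hμ0 _ _).1 hy
  refine ⟨z, ⟨fun i => ?_, hzL, ?_⟩, rfl⟩
  · have : (z i : ℝ) < c i + 1 := (hzx i).trans_lt (by linarith)
    exact Int.lt_add_one_iff.1 (by exact_mod_cast this)
  refine le_of_dvd_sub_of_lt_add (N := a (Fin.last d)) ?_ ?_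
  · have : F - ∑ i, a (Fin.castSucc i) * (c i - z i)
        = ∑ i, a (Fin.castSucc i) * z i - (∑ i, a (Fin.castSucc i) * c i - F) := by
      simp only [mul_sub, Finset.sum_sub_distrib]
      ring
    rw [this]
    exact dvd_sub hzL hc
  · have : ((∑ i, a (Fin.castSucc i) * (c i - z i) : ℤ) : ℝ)
        = ∑ i, (a (Fin.castSucc i) : ℝ) * ((c i + 1 - ε) - Rvec z i)
          - ∑ i, (a (Fin.castSucc i) : ℝ) + ε * ∑ i, (a (Fin.castSucc i) : ℝ) := by
      simp only [Rvec, Finset.mul_sum, ← Finset.sum_sub_distrib, ← Finset.sum_add_distrib]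
      push_cast
      exact Finset.sum_congr rfl fun i _ => by ring
    have hsplit := Fin.sum_univ_castSucc fun i => (a i : ℝ)
    have : ((∑ i, a (Fin.castSucc i) * (c i - z i) : ℤ) : ℝ) < F + a (Fin.last d) := by
      linarith
    exact_mod_cast this

lemma le_of_isCovering (hpos : ∀ i, 0 < a i) (hprim : Finset.univ.gcd a = 1) {s : ℕ} {F : ℤ}
    (hF : (solSet a F).ncard < s) {μ : ℝ} (hμ0 : 0 < μ)
    (hcov : IsCovering s (knapsackSimplex a) (knapsackLattice a) μ) :
    F + ∑ i, (a i : ℝ) ≤ μ := by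
  by_contra! hμ
  obtain ⟨c, hc⟩ := exists_dvd_sum_castSucc_sub hprim F
  set A : ℝ := ∑ i, (a (Fin.castSucc i) : ℝ)
  have hA : 0 ≤ A := Finset.sum_nonneg fun i _ => by exact_mod_cast (hpos _).le
  set ε : ℝ := (F + ∑ i, (a i : ℝ) - μ) / (A + 1)
  have hε : 0 < ε := div_pos (by linarith) (by linarith)
  have hεA : μ + ε * A < F + ∑ i, (a i : ℝ) :=
    calc μ + ε * A < μ + ε * (A + 1) := by linarith [mul_pos hε one_pos]
      _ = _ := by rw [div_mul_cancel₀ _ (by linarith)]; ring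
  obtain ⟨T, hTL, hTs, hTx⟩ := hcov fun i => c i + 1 - ε
  have hT : ↑T ⊆ Rvec '' latticePtsBelow a c F := fun y hy =>
    mem_image_rvec_latticePtsBelow hc hμ0 hε hεA (hTL hy) (hTx y hy)
  have : T.card ≤ (solSet a F).ncard := by
    rw [← Set.ncard_coe_finset, ← ncard_latticePtsBelow hpos hc,
      ← rvec_injective.injOn.ncard_image]
    exact Set.ncard_le_ncard hT ((latticePtsBelow_finite hpos hc).image _)
  omega

end Covering

/-- Kannan-type identity: μ_s(S_a, L_a) = F_s(a) + a₁ + ⋯ + aₙ, with n = d + 1. -/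
theorem stmt_12 {d : ℕ} (hd : 1 ≤ d) (s : ℕ) (hs : 1 ≤ s)
    (a : Fin (d + 1) → ℤ) (hpos : ∀ i, 0 < a i) (hprim : Finset.univ.gcd a = 1) :
    muCov s {x : Fin d → ℝ | (∀ i, 0 ≤ x i) ∧ ∑ i, (a (Fin.castSucc i) : ℝ) * x i ≤ 1}
        {x : Fin d → ℝ | ∃ z : Fin d → ℤ,
          x = Rvec z ∧ a (Fin.last d) ∣ ∑ i, a (Fin.castSucc i) * z i} =
      (sFrob s a : ℝ) + ∑ i, (a i : ℝ) := by
  have hn : 2 ≤ d + 1 := by omega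
  have hv : 0 < (sFrob s a : ℝ) + ∑ i, (a i : ℝ) := by
    have hF : (-1 : ℝ) ≤ sFrob s a := by exact_mod_cast neg_one_le_sFrob hpos hprim hn hs
    have hsum : (2 : ℝ) ≤ ∑ i, (a i : ℝ) :=
      calc (2 : ℝ) ≤ ∑ _i : Fin (d + 1), (1 : ℝ) := by simpa using (by exact_mod_cast hn)
        _ ≤ _ := Finset.sum_le_sum fun i _ => by exact_mod_cast hpos i
    linarith
  refine muCov_eq_of_span_eq_top (span_knapsackLattice a (hpos _).ne') fun μ => ⟨?_, ?_⟩
  · rintro ⟨hμ0, hcov⟩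
    exact le_of_isCovering hpos hprim (ncard_solSet_sFrob_lt hpos hprim hn hs) hμ0 hcov
  · intro hμ
    exact ⟨hv.trans_le hμ, isCovering_of_le hpos
      (fun _ hb => le_ncard_solSet_of_sFrob_lt hpos hprim hn hb) (hv.trans_le hμ) hμ⟩

end
end

section
/- Let L ⊂ ℝ^n be a d-dimensional lattice, let K be a convex body contained in the real span of L, and let s ≥ 1 be an integer. Then s^{1/d}·(det(L)/vol(K))^{1/d} ≤ μ_s(K, L) ≤ μ_1(K, L) + (s−1)^{1/d}·(det(L)/vol(K))^{1/d}, where vol(K) denotes the d-dimensional volume of K and det(L) the lattice determinant. -/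
/-
Pull everything back along `c ↦ ∑ cᵢ bᵢ`: `L` becomes `ℤᵈ`, `K` becomes a convex body `K'` with
`vol K' = vol K / det L`, and the covering radii do not change.

Integrating over a fundamental domain of `ℤᵈ` the number of lattice translates of a set `S` that
contain a point gives `vol S`. Hence an `s`-fold covering `ℤᵈ + μK'` has `s ≤ μᵈ vol K'`, which is
the lower bound. Conversely, if `ρᵈ vol K' > s - 1` then some point `y` lies in `s` translates
`z + ρK'`; if `ℤᵈ + μK'` is a covering, write `x - y ∈ w + μK'` to get
`x ∈ z + w + (μK' + ρK') = z + w + (μ + ρ)K'` for all `s` of them, by convexity. Letting `ρ`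
decrease to `((s - 1) / vol K')^(1/d)` gives the upper bound.
-/

open scoped BigOperators
open Matrix

noncomputable section

open MeasureTheory Pointwise Set Submodule
open scoped ENNReal Finset

theorem measureReal_pos_of_nonempty_interior {X : Type*} [TopologicalSpace X] [MeasurableSpace X]
    {μ : Measure X} [μ.IsOpenPosMeasure] [IsFiniteMeasureOnCompacts μ] {K : Set X}
    (hK : IsCompact K) (hKint : (interior K).Nonempty) : 0 < μ.real K :=
  ENNReal.toReal_pos (μ.measure_pos_of_nonempty_interior hKint).ne' hK.measure_lt_top.ne

theorem MeasureTheory.Measure.addHaar_real_smul_of_nonneg {E : Type*} [NormedAddCommGroup E]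
    [NormedSpace ℝ E] [MeasurableSpace E] [BorelSpace E] [FiniteDimensional ℝ E] (μ : Measure E)
    [μ.IsAddHaarMeasure] {r : ℝ} (hr : 0 ≤ r) (s : Set E) :
    μ.real (r • s) = r ^ Module.finrank ℝ E * μ.real s := by
  simp [measureReal_def, μ.addHaar_smul_of_nonneg hr, ENNReal.toReal_ofReal, hr]

namespace MeasureTheory.IsAddFundamentalDomain

variable {G α : Type*} [AddGroup G] [Countable G] [AddAction G α] [MeasurableSpace α]
  [MeasurableConstVAdd G α] {F S : Set α} {μ : Measure α} [VAddInvariantMeasure G α μ]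

theorem setLIntegral_tsum_indicator_vadd (h : IsAddFundamentalDomain G F μ)
    (hS : MeasurableSet S) : ∫⁻ x in F, ∑' g : G, (g +ᵥ S).indicator 1 x ∂μ = μ S := by
  rw [lintegral_tsum fun g => (measurable_one.indicator (hS.const_vadd g)).aemeasurable,
    h.measure_eq_tsum S]
  refine tsum_congr fun g => ?_
  rw [lintegral_indicator_one (hS.const_vadd g), Measure.restrict_apply (hS.const_vadd g)]

theorem card_mul_measure_le (h : IsAddFundamentalDomain G F μ) (hS : MeasurableSet S) {s : ℕ}
    (hcov : ∀ x, ∃ T : Finset G, s ≤ #T ∧ ∀ g ∈ T, x ∈ g +ᵥ S) : s * μ F ≤ μ S := by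
  calc s * μ F = ∫⁻ _ in F, (s : ℝ≥0∞) ∂μ := (setLIntegral_const F _).symm
    _ ≤ ∫⁻ x in F, ∑' g : G, (g +ᵥ S).indicator 1 x ∂μ := lintegral_mono fun x => by
      obtain ⟨T, hsT, hT⟩ := hcov x
      calc (s : ℝ≥0∞) ≤ #T := by exact_mod_cast hsT
        _ = ∑ g ∈ T, (g +ᵥ S).indicator 1 x := by
          simp [Finset.sum_congr rfl fun g hg => indicator_of_mem (hT g hg) (1 : α → ℝ≥0∞)]
        _ ≤ _ := ENNReal.sum_le_tsum T
    _ = μ S := h.setLIntegral_tsum_indicator_vadd hS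

theorem exists_lt_card_of_mul_measure_lt (h : IsAddFundamentalDomain G F μ)
    (hS : MeasurableSet S) {m : ℕ} (hm : m * μ F < μ S) :
    ∃ x, ∃ T : Finset G, m < #T ∧ ∀ g ∈ T, x ∈ g +ᵥ S := by
  by_contra! hsparse
  refine hm.not_ge ?_
  calc μ S = ∫⁻ x in F, ∑' g : G, (g +ᵥ S).indicator 1 x ∂μ :=
        (h.setLIntegral_tsum_indicator_vadd hS).symm
    _ ≤ ∫⁻ _ in F, (m : ℝ≥0∞) ∂μ := lintegral_mono fun x => by
      classical
      rw [ENNReal.tsum_eq_iSup_sum]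
      refine iSup_le fun T => ?_
      rw [show ∑ g ∈ T, (g +ᵥ S).indicator 1 x = (#{g ∈ T | x ∈ g +ᵥ S} : ℝ≥0∞) by
        simp [indicator_apply, Finset.sum_boole]]
      by_contra! hlt
      obtain ⟨g, hg, hx⟩ := hsparse x {g ∈ T | x ∈ g +ᵥ S} (by exact_mod_cast hlt)
      exact hx (Finset.mem_filter.1 hg).2
    _ = m * μ F := setLIntegral_const F _

end MeasureTheory.IsAddFundamentalDomain

def IsSFoldCovering {N : ℕ} (s : ℕ) (K L : Set (Fin N → ℝ)) (μ : ℝ) : Prop :=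
  ∀ x ∈ span ℝ L, ∃ T : Finset (Fin N → ℝ), ↑T ⊆ L ∧ s ≤ #T ∧ ∀ y ∈ T, ∃ k ∈ K, x = y + μ • k

theorem muCov_eq_sInf {N : ℕ} (s : ℕ) (K L : Set (Fin N → ℝ)) :
    muCov s K L = sInf {μ | 0 < μ ∧ IsSFoldCovering s K L μ} := rfl

section Image

variable {m N s : ℕ} {K L : Set (Fin m → ℝ)} {μ : ℝ}
  (φ : (Fin m → ℝ) →ₗ[ℝ] (Fin N → ℝ)) (hφ : Function.Injective φ)
include hφ

theorem isSFoldCovering_image_iff :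
    IsSFoldCovering s (φ '' K) (φ '' L) μ ↔ IsSFoldCovering s K L μ := by
  classical
  rw [IsSFoldCovering, IsSFoldCovering, ← Submodule.map_span]
  constructor
  · intro h x hx
    obtain ⟨T, hTL, hsT, hT⟩ := h (φ x) (Submodule.mem_map_of_mem hx)
    have hTφ : ↑T ⊆ range φ := hTL.trans (image_subset_range _ _)
    refine ⟨T.preimage φ hφ.injOn, fun y hy => ?_, ?_, fun y hy => ?_⟩
    · obtain ⟨y', hy', hyy'⟩ := hTL (Finset.mem_preimage.1 hy)
      rwa [← hφ hyy']
    · rwa [Finset.card_preimage, Finset.filter_true_of_mem fun y hy => hTφ hy]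
    · obtain ⟨_, ⟨k, hk, rfl⟩, hxk⟩ := hT _ (Finset.mem_preimage.1 hy)
      exact ⟨k, hk, hφ (by simpa using hxk)⟩
  · rintro h _ ⟨x, hx, rfl⟩
    obtain ⟨T, hTL, hsT, hT⟩ := h x hx
    refine ⟨T.image φ, by simpa using image_mono hTL,
      by rwa [Finset.card_image_of_injective _ hφ], ?_⟩
    simp only [Finset.mem_image, forall_exists_index, and_imp, forall_apply_eq_imp_iff₂]
    intro y hy
    obtain ⟨k, hk, rfl⟩ := hT y hy
    exact ⟨φ k, mem_image_of_mem φ hk, by simp⟩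

theorem muCov_image : muCov s (φ '' K) (φ '' L) = muCov s K L := by
  simp only [muCov_eq_sInf, isSFoldCovering_image_iff φ hφ]

end Image

namespace ZSpan

variable {ι : Type*} {N s : ℕ} (b : Module.Basis ι ℝ (Fin N → ℝ)) {K : Set (Fin N → ℝ)}
  {μ ρ : ℝ}

instance : VAddInvariantMeasure (span ℤ (range b)) (Fin N → ℝ) volume :=
  inferInstanceAs (VAddInvariantMeasure (span ℤ (range b)).toAddSubgroup _ volume)

theorem isSFoldCovering_iff :
    IsSFoldCovering s K (span ℤ (range b)) μ ↔
      ∀ x, ∃ T : Finset (span ℤ (range b)), s ≤ #T ∧ ∀ g ∈ T, x ∈ g +ᵥ μ • K := by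
  classical
  have hspan : span ℝ (span ℤ (range b) : Set (Fin N → ℝ)) = ⊤ := by
    rw [Submodule.span_span_of_tower, b.span_eq]
  have hmem (x y : Fin N → ℝ) : x ∈ y +ᵥ μ • K ↔ ∃ k ∈ K, x = y + μ • k := by
    simp [mem_vadd_set, mem_smul_set, eq_comm]
  simp only [IsSFoldCovering, hspan, Submodule.mem_top, true_implies]
  refine forall_congr' fun x => ⟨?_, ?_⟩
  · rintro ⟨T, hTL, hsT, hT⟩
    refine ⟨T.subtype (· ∈ span ℤ (range b)), ?_, fun g hg => ?_⟩
    · rwa [Finset.card_subtype, Finset.filter_true_of_mem fun y hy => SetLike.mem_coe.1 (hTL hy)]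
    · exact (hmem _ _).2 (hT _ (Finset.mem_subtype.1 hg))
  · rintro ⟨T, hsT, hT⟩
    refine ⟨T.map (Function.Embedding.subtype _), by simpa [Set.subset_def] using fun _ h _ => h,
      by simpa using hsT, ?_⟩
    simp only [Finset.mem_map, Function.Embedding.coe_subtype, forall_exists_index, and_imp,
      forall_apply_eq_imp_iff₂]
    exact fun g hg => (hmem _ _).1 (hT g hg)

variable [Finite ι]

theorem _root_.IsSFoldCovering.card_mul_volume_fundamentalDomain_le (hK : IsCompact K)
    (h : IsSFoldCovering s K (span ℤ (range b)) μ) :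
    s * volume (fundamentalDomain b) ≤ volume (μ • K) :=
  (ZSpan.isAddFundamentalDomain b volume).card_mul_measure_le
    (hK.smul μ).isClosed.measurableSet ((isSFoldCovering_iff b).1 h)

theorem _root_.IsSFoldCovering.add_of_mul_volume_lt (hK : IsCompact K) (hKconv : Convex ℝ K)
    (hμ : 0 ≤ μ) (hρ : 0 ≤ ρ) (h : IsSFoldCovering 1 K (span ℤ (range b)) μ)
    (hvol : (s - 1 : ℕ) * volume (fundamentalDomain b) < volume (ρ • K)) :
    IsSFoldCovering s K (span ℤ (range b)) (μ + ρ) := by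
  classical
  obtain ⟨y, T, hsT, hyT⟩ :=
    (ZSpan.isAddFundamentalDomain b volume).exists_lt_card_of_mul_measure_lt
      (hK.smul ρ).isClosed.measurableSet hvol
  rw [isSFoldCovering_iff] at h ⊢
  intro x
  obtain ⟨W, hW, hxW⟩ := h (x - y)
  obtain ⟨w, hw⟩ := Finset.card_pos.1 hW
  refine ⟨T.image (w + ·), ?_, fun g hg => ?_⟩
  · rw [Finset.card_image_of_injective _ (add_right_injective w)]
    omega
  obtain ⟨t, ht, rfl⟩ := Finset.mem_image.1 hg
  obtain ⟨a, ha, hxa⟩ := mem_vadd_set.1 (hxW w hw)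
  obtain ⟨c, hc, hyc⟩ := mem_vadd_set.1 (hyT t ht)
  rw [hKconv.add_smul hμ hρ]
  refine mem_vadd_set.2 ⟨a + c, add_mem_add ha hc, ?_⟩
  simp only [Submodule.vadd_def, vadd_eq_add, Submodule.coe_add] at hxa hyc ⊢
  rw [← sub_add_cancel x y, ← hxa, ← hyc]
  abel

theorem exists_isSFoldCovering_one (hK : (interior K).Nonempty) :
    ∃ μ > 0, IsSFoldCovering 1 K (span ℤ (range b)) μ := by
  cases nonempty_fintype ι
  obtain ⟨c, hc⟩ := hK
  obtain ⟨r, hr, hball⟩ := Metric.isOpen_iff.1 isOpen_interior c hc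
  set R := ∑ i, ‖b i‖
  have hμ : 0 < (R + 1) / r := by positivity
  refine ⟨(R + 1) / r, hμ, (isSFoldCovering_iff b).2 fun x =>
    ⟨{floor b (x - ((R + 1) / r) • c)}, by simp, ?_⟩⟩
  set μ := (R + 1) / r
  set f := fract b (x - μ • c) with hf
  simp only [Finset.mem_singleton, forall_eq]
  refine mem_vadd_set.2 ⟨μ • (c + μ⁻¹ • f), smul_mem_smul_set (interior_subset (hball ?_)), ?_⟩
  · rw [Metric.mem_ball, dist_eq_norm, add_sub_cancel_left, norm_smul, norm_inv,
      Real.norm_of_nonneg hμ.le, inv_mul_lt_iff₀ hμ]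
    calc ‖f‖ ≤ R := norm_fract_le b _
      _ < R + 1 := lt_add_one R
      _ = μ * r := (div_mul_cancel₀ _ hr.ne').symm
  · rw [smul_add, smul_inv_smul₀ hμ.ne', Submodule.vadd_def, vadd_eq_add, hf, fract_apply]
    abel

theorem volume_fundamentalDomain_pi_basisFun [Fintype ι] :
    volume (fundamentalDomain (Pi.basisFun ℝ ι)) = 1 := by
  rw [fundamentalDomain_pi_basisFun, volume_pi_pi]
  simp

end ZSpan

section StandardLattice

variable {d s : ℕ} {K : Set (Fin d → ℝ)} {μ ρ : ℝ}

local notation "ℤᵈ" => span ℤ (range (Pi.basisFun ℝ (Fin d)))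

theorem IsSFoldCovering.card_le_pow_mul_measureReal (hK : IsCompact K) (hμ : 0 ≤ μ)
    (h : IsSFoldCovering s K ℤᵈ μ) : (s : ℝ) ≤ μ ^ d * volume.real K := by
  have hvol := h.card_mul_volume_fundamentalDomain_le _ hK
  rw [ZSpan.volume_fundamentalDomain_pi_basisFun, mul_one] at hvol
  have hsmul := volume.addHaar_real_smul_of_nonneg hμ K
  rw [Module.finrank_fin_fun] at hsmul
  rw [← hsmul, measureReal_def]
  exact_mod_cast (ENNReal.toReal_le_toReal (by simp) (hK.smul μ).measure_lt_top.ne).2 hvol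

theorem IsSFoldCovering.add_of_sub_one_lt (hK : IsCompact K) (hKconv : Convex ℝ K) (hμ : 0 ≤ μ)
    (hρ : 0 ≤ ρ) (hs : 1 ≤ s) (h : IsSFoldCovering 1 K ℤᵈ μ)
    (hvol : (s : ℝ) - 1 < ρ ^ d * volume.real K) : IsSFoldCovering s K ℤᵈ (μ + ρ) := by
  refine h.add_of_mul_volume_lt _ hK hKconv hμ hρ ?_
  have hsmul := volume.addHaar_real_smul_of_nonneg hρ K
  rw [Module.finrank_fin_fun] at hsmul
  rw [ZSpan.volume_fundamentalDomain_pi_basisFun, mul_one,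
    ← ENNReal.toReal_lt_toReal (by simp) (hK.smul ρ).measure_lt_top.ne]
  rwa [← measureReal_def, hsmul, ENNReal.toReal_natCast, Nat.cast_sub hs, Nat.cast_one]

variable (hd : d ≠ 0) (hK : IsCompact K) (hKconv : Convex ℝ K) (hKint : (interior K).Nonempty)
  (hs : 1 ≤ s)
include hd hK hKconv hKint hs

theorem exists_isSFoldCovering : ∃ μ > 0, IsSFoldCovering s K ℤᵈ μ := by
  have hV := measureReal_pos_of_nonempty_interior (μ := volume) hK hKint
  obtain ⟨μ, hμ, h⟩ := ZSpan.exists_isSFoldCovering_one (Pi.basisFun ℝ (Fin d)) hKint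
  set ρ := ((s : ℝ) / volume.real K) ^ ((1 : ℝ) / d) with hρ
  refine ⟨μ + ρ, by positivity, h.add_of_sub_one_lt hK hKconv hμ.le (by positivity) hs ?_⟩
  rw [hρ, one_div, Real.rpow_inv_natCast_pow (by positivity) hd, div_mul_cancel₀ _ hV.ne']
  linarith

theorem rpow_div_measureReal_le_muCov :
    ((s : ℝ) / volume.real K) ^ ((1 : ℝ) / d) ≤ muCov s K ℤᵈ := by
  have hV := measureReal_pos_of_nonempty_interior (μ := volume) hK hKint
  obtain ⟨μ₀, hμ₀, h₀⟩ := exists_isSFoldCovering hd hK hKconv hKint hs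
  rw [muCov_eq_sInf]
  refine le_csInf ⟨μ₀, hμ₀, h₀⟩ fun μ ⟨hμ, h⟩ => ?_
  calc ((s : ℝ) / volume.real K) ^ ((1 : ℝ) / d) ≤ (μ ^ d) ^ ((1 : ℝ) / d) :=
        Real.rpow_le_rpow (by positivity)
          ((div_le_iff₀ hV).2 (h.card_le_pow_mul_measureReal hK hμ.le)) (by positivity)
    _ = μ := by rw [one_div, Real.pow_rpow_inv_natCast hμ.le hd]

theorem muCov_le_muCov_one_add :
    muCov s K ℤᵈ ≤ muCov 1 K ℤᵈ + (((s : ℝ) - 1) / volume.real K) ^ ((1 : ℝ) / d) := by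
  have hV := measureReal_pos_of_nonempty_interior (μ := volume) hK hKint
  have hs₁ : (0 : ℝ) ≤ s - 1 := sub_nonneg.2 (Nat.one_le_cast.2 hs)
  obtain ⟨μ₀, hμ₀, h₀⟩ := exists_isSFoldCovering hd hK hKconv hKint le_rfl
  refine le_of_forall_gt_imp_ge_of_dense fun c hc => ?_
  set ρ₀ := (((s : ℝ) - 1) / volume.real K) ^ ((1 : ℝ) / d) with hρ₀
  set ρ := c - muCov 1 K ℤᵈ
  have hρ₀ρ : ρ₀ < ρ := by
    simp only [ρ]
    linarith
  have hρ : 0 ≤ ρ := (Real.rpow_nonneg (by positivity) _).trans hρ₀ρ.le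
  have hvol : (s : ℝ) - 1 < ρ ^ d * volume.real K := by
    rw [← div_lt_iff₀ hV]
    calc ((s : ℝ) - 1) / volume.real K = ρ₀ ^ d := by
          rw [hρ₀, one_div, Real.rpow_inv_natCast_pow (by positivity) hd]
      _ < ρ ^ d := pow_lt_pow_left₀ hρ₀ρ (by positivity) hd
  have : muCov s K ℤᵈ - ρ ≤ muCov 1 K ℤᵈ := by
    rw [muCov_eq_sInf 1]
    refine le_csInf ⟨μ₀, hμ₀, h₀⟩ fun μ ⟨hμ, h⟩ => ?_
    rw [sub_le_iff_le_add]
    exact csInf_le ⟨0, fun _ h => h.1.le⟩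
      ⟨by positivity, h.add_of_sub_one_lt hK hKconv hμ.le hρ hs hvol⟩
  linarith

end StandardLattice

theorem det_gram_pos {d n : ℕ} {b : Fin d → Fin n → ℝ} (hb : LinearIndependent ℝ b) :
    0 < (Matrix.of fun i j : Fin d => ∑ t, b i t * b j t).det := by
  have hinj : Function.Injective (Matrix.of b).vecMul := by
    convert hb.fintypeLinearCombination_injective using 1
    funext x
    exact Matrix.vecMul_eq_sum x (Matrix.of b)
  have hgram : (Matrix.of fun i j : Fin d => ∑ t, b i t * b j t) =
      Matrix.of b * (Matrix.of b)ᴴ := by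
    ext i j
    simp [Matrix.mul_apply]
  rw [hgram]
  exact (Matrix.PosDef.mul_conjTranspose_self _ hinj).det_pos

theorem coe_span_int_pi_basisFun (ι : Type*) [Fintype ι] :
    (span ℤ (range (Pi.basisFun ℝ ι)) : Set (ι → ℝ)) = range fun (z : ι → ℤ) i => (z i : ℝ) := by
  ext x
  simp only [SetLike.mem_coe, (Pi.basisFun ℝ ι).mem_span_iff_repr_mem ℤ, Pi.basisFun_repr,
    algebraMap_int_eq, eq_intCast, mem_range]
  exact ⟨fun h => ⟨fun i => (h i).choose, funext fun i => (h i).choose_spec⟩,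
    fun ⟨z, hz⟩ i => ⟨z i, congrFun hz i⟩⟩

/-- Bounds on the s-covering radius of a convex body K with respect to a d-dimensional
lattice L ⊂ ℝ^n spanned over ℤ by linearly independent vectors b₁, …, b_d.  Here
det L = √(det Gram(b)) and the d-dimensional volume of K is expressed via the
parametrization c ↦ ∑ cᵢ bᵢ of the real span of L. -/
theorem stmt_13 {n d : ℕ} (hd : 1 ≤ d) (s : ℕ) (hs : 1 ≤ s)
    (b : Fin d → Fin n → ℝ) (hb : LinearIndependent ℝ b)
    (L : Set (Fin n → ℝ)) (hL : L = {x | ∃ z : Fin d → ℤ, x = ∑ i, (z i : ℝ) • b i})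
    (K : Set (Fin n → ℝ))
    (hKspan : K ⊆ (Submodule.span ℝ (Set.range b) : Set (Fin n → ℝ)))
    (hKcomp : IsCompact K) (hKconv : Convex ℝ K)
    (hKint : (interior ((fun c : Fin d → ℝ => ∑ i, c i • b i) ⁻¹' K)).Nonempty)
    (detL volK : ℝ)
    (hdetL : detL = Real.sqrt (Matrix.det (Matrix.of fun i j : Fin d => ∑ t, b i t * b j t)))
    (hvolK : volK = detL *
      (MeasureTheory.volume ((fun c : Fin d → ℝ => ∑ i, c i • b i) ⁻¹' K)).toReal) :
    (s : ℝ) ^ ((1 : ℝ) / d) * (detL / volK) ^ ((1 : ℝ) / d) ≤ muCov s K L ∧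
      muCov s K L ≤ muCov 1 K L + ((s : ℝ) - 1) ^ ((1 : ℝ) / d) * (detL / volK) ^ ((1 : ℝ) / d) := by
  set φ := Fintype.linearCombination ℝ b
  have hφ : Function.Injective φ := hb.fintypeLinearCombination_injective
  set K' := φ ⁻¹' K
  have hK'comp : IsCompact K' :=
    (LinearMap.isClosedEmbedding_of_injective (LinearMap.ker_eq_bot.2 hφ)).isCompact_preimage hKcomp
  have hK'conv : Convex ℝ K' := hKconv.linear_preimage φ
  have hKimage : φ '' K' = K :=
    image_preimage_eq_of_subset (by rwa [← LinearMap.coe_range, Fintype.range_linearCombination])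
  have hLimage : φ '' (span ℤ (range (Pi.basisFun ℝ (Fin d))) : Set (Fin d → ℝ)) = L := by
    rw [coe_span_int_pi_basisFun, ← range_comp, hL]
    ext x
    simp [φ, Fintype.linearCombination_apply, eq_comm]
  have hV := measureReal_pos_of_nonempty_interior (μ := volume) hK'comp hKint
  have hratio : detL / volK = 1 / volume.real K' := by
    have hdetL_pos : 0 < detL := hdetL ▸ Real.sqrt_pos.2 (det_gram_pos hb)
    rw [show volK = detL * volume.real K' from hvolK]
    field_simp
  have hd' : d ≠ 0 := by omega
  have hs₁ : (0 : ℝ) ≤ s - 1 := sub_nonneg.2 (Nat.one_le_cast.2 hs)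
  rw [← hKimage, ← hLimage, muCov_image φ hφ, muCov_image φ hφ, hratio,
    ← Real.mul_rpow (by positivity) (by positivity), ← Real.mul_rpow hs₁ (by positivity),
    mul_one_div, mul_one_div]
  exact ⟨rpow_div_measureReal_le_muCov hd' hK'comp hK'conv hKint hs,
    muCov_le_muCov_one_add hd' hK'comp hK'conv hKint hs⟩

end
end

section
/- Let A ∈ ℤ^{m×n} with 1 ≤ m < n and write A = (A_1, A_2) with A_1 ∈ ℤ^{m×m} and det A_1 ≠ 0. If m(A) > 0, then c(A_1, A) ≤ (n−m)·M(A)/m(A), where m(A) and M(A) are the minimal and maximal absolute values of the m×m minors of A. -/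
open scoped BigOperators
open Matrix

noncomputable section

/-- Bound on c(A₁, A) in terms of the minors of A. Here n = m + k and A = (A₁, A₂). -/
theorem stmt_14 {m k : ℕ} (hm : 1 ≤ m) (hk : 1 ≤ k)
    (A : Matrix (Fin m) (Fin (m + k)) ℤ)
    (A1 : Matrix (Fin m) (Fin m) ℤ) (hA1 : A1 = Matrix.of fun i j => A i (Fin.castAdd k j))
    (A2 : Matrix (Fin m) (Fin k) ℤ) (hA2 : A2 = Matrix.of fun i j => A i (Fin.natAdd m j))
    (hdet : A1.det ≠ 0) (hmin : 0 < mMin A)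
    (c : ℝ) (hc : c = sSup {x : ℝ | ∃ i : Fin m,
      x = ∑ j : Fin k,
        max (((A1.map (Int.cast : ℤ → ℝ))⁻¹ * A2.map (Int.cast : ℤ → ℝ)) i j) 0}) :
    c ≤ (k : ℝ) * (mMax A : ℝ) / (mMin A : ℝ) := by
  classical
  have hfin : (minorAbs A).Finite := by
    have hsub : minorAbs A ⊆
        Set.range (fun I : Fin m ↪ Fin (m + k) => |(A.submatrix id ⇑I).det|) := by
      rintro d ⟨I, rfl⟩; exact ⟨I, rfl⟩
    exact (Set.finite_range _).subset hsub
  have hmem_max : ∀ d ∈ minorAbs A, d ≤ mMax A := fun d hd => le_csSup hfin.bddAbove hd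
  have hmem_min : ∀ d ∈ minorAbs A, mMin A ≤ d := fun d hd => csInf_le hfin.bddBelow hd
  have hA1mem : |A1.det| ∈ minorAbs A := by
    refine ⟨(Fin.castAddOrderEmb k).toEmbedding, ?_⟩
    congr 2
  have hDmin : mMin A ≤ |A1.det| := hmem_min _ hA1mem
  have hMpos : 0 < mMax A := lt_of_lt_of_le hmin (hDmin.trans (hmem_max _ hA1mem))
  set B1 : Matrix (Fin m) (Fin m) ℝ := A1.map (Int.cast : ℤ → ℝ) with hB1
  set B2 : Matrix (Fin m) (Fin k) ℝ := A2.map (Int.cast : ℤ → ℝ) with hB2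
  have hB1det : B1.det = ((A1.det : ℤ) : ℝ) := by
    rw [hB1]
    exact ((Int.castRingHom ℝ).map_det A1).symm
  have key : ∀ (i : Fin m) (j : Fin k),
      |(B1⁻¹ * B2) i j| ≤ (mMax A : ℝ) / (mMin A : ℝ) := by
    intro i j
    set N : Matrix (Fin m) (Fin m) ℤ := A1.updateCol i (fun l => A2 l j) with hN
    have hNmem : |N.det| ∈ minorAbs A := by
      have hfinj : Function.Injective
          (fun c : Fin m => if c = i then Fin.natAdd m j else Fin.castAdd k c) := by
        intro a b hab
        have h := congrArg Fin.val hab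
        have ha := a.isLt; have hb := b.isLt
        simp only at h
        split_ifs at h with h1 h2 h2
        · exact h1.trans h2.symm
        · simp only [Fin.coe_natAdd, Fin.coe_castAdd] at h; omega
        · simp only [Fin.coe_natAdd, Fin.coe_castAdd] at h; omega
        · exact Fin.ext (by simpa using h)
      refine ⟨⟨_, hfinj⟩, ?_⟩
      congr 2
      rw [hN, hA1, hA2]
      ext r c
      by_cases hci : c = i <;> simp [Matrix.updateCol_apply, hci]
    have hentry : (B1⁻¹ * B2) i j = (B1.det)⁻¹ * ((N.det : ℤ) : ℝ) := by
      rw [Matrix.inv_def, Ring.inverse_eq_inv', Matrix.smul_mul, Matrix.smul_apply,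
        smul_eq_mul]
      congr 1
      have h1 : (B1.adjugate * B2) i j = Matrix.cramer B1 (fun l => B2 l j) i := by
        rw [Matrix.cramer_eq_adjugate_mulVec]
        simp [Matrix.mul_apply, Matrix.mulVec, dotProduct]
      rw [h1, Matrix.cramer_apply]
      have h2 : B1.updateCol i (fun l => B2 l j) = N.map (Int.cast : ℤ → ℝ) := by
        rw [hB1, hB2, hN, Matrix.map_updateCol]
        rfl
      rw [h2]
      exact ((Int.castRingHom ℝ).map_det N).symm
    rw [hentry, hB1det, abs_mul, abs_inv, ← Int.cast_abs, ← Int.cast_abs, inv_mul_eq_div]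
    have h1 : ((|N.det| : ℤ) : ℝ) ≤ ((mMax A : ℤ) : ℝ) := by
      exact_mod_cast hmem_max _ hNmem
    have h2 : ((mMin A : ℤ) : ℝ) ≤ ((|A1.det| : ℤ) : ℝ) := by exact_mod_cast hDmin
    have h3 : (0 : ℝ) < ((mMin A : ℤ) : ℝ) := by exact_mod_cast hmin
    exact div_le_div₀ (by exact_mod_cast hMpos.le) h1 h3 h2
  have hdiv_nonneg : (0 : ℝ) ≤ (mMax A : ℝ) / (mMin A : ℝ) :=
    div_nonneg (by exact_mod_cast hMpos.le) (by exact_mod_cast hmin.le)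
  rw [hc]
  apply csSup_le
  · exact ⟨_, ⟨⟨0, hm⟩, rfl⟩⟩
  · rintro x ⟨i, rfl⟩
    calc ∑ j : Fin k, max ((B1⁻¹ * B2) i j) 0
        ≤ ∑ _j : Fin k, (mMax A : ℝ) / (mMin A : ℝ) := by
          refine Finset.sum_le_sum fun j _ => max_le ?_ hdiv_nonneg
          exact (le_abs_self _).trans (key i j)
      _ = (k : ℝ) * ((mMax A : ℝ) / (mMin A : ℝ)) := by
          simp [Finset.sum_const, Finset.card_univ]
      _ = (k : ℝ) * (mMax A : ℝ) / (mMin A : ℝ) := by ring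


end
end

section
/- Let A ∈ ℤ^{m×n} with 1 ≤ m < n satisfy the regularity assumptions and let v = A·1. Then the translate P(A, v) − 1 of the knapsack polytope by the negative of the all-ones vector contains the (n−m)-dimensional central section [−1,1]^n ∩ ker_ℝ(A) of the cube [−1,1]^n, and consequently the (n−m)-dimensional volume of P(A, v) is at least 2^{n−m}. -/
/-!
A point `x` of `[-1,1]ⁿ ∩ ker A` gives the nonnegative solution `x + 1` of `A y = A 1`, which is
the inclusion. Since `ker A` has dimension at least `d = n - m` and every coordinate of a vector is
bounded by its Euclidean norm, the section contains an isometric copy of the closed unit ball of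
`ℝᵈ`. The (unnormalised) Hausdorff measure `μH[d]` of that ball is at least `2ᵈ` by the
isodiametric inequality `vol E ≤ vol (B (diam E / 2))`, which follows from the Brunn–Minkowski
inequality for `E` and `-E` because `(E - E) / 2 ⊆ B (diam E / 2)`. Brunn–Minkowski is the
Prékopa–Leindler inequality for indicator functions; the latter is proved by induction on the
dimension, the one-dimensional case reducing, through the layer cake formula, to
`|A| + |B| ≤ |A + B|` for superlevel sets.
-/

open scoped BigOperators
open Matrix

noncomputable section

open MeasureTheory
open Set Pointwise
open scoped ENNReal NNReal

theorem Real.volume_add_volume_le_volume_add_of_isCompact {K L : Set ℝ} (hK : IsCompact K)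
    (hL : IsCompact L) (hK₀ : K.Nonempty) (hL₀ : L.Nonempty) :
    volume K + volume L ≤ volume (K + L) := by
  -- `K + {inf L}` and `{sup K} + L` lie in `K + L` and meet only in `sup K + inf L`
  set a := sSup K
  set b := sInf L
  have ha : a ∈ K := hK.sSup_mem hK₀
  have hb : b ∈ L := hL.sInf_mem hL₀
  have hinter : (K + {b}) ∩ ({a} + L) ⊆ {a + b} := by
    rintro _ ⟨⟨k, hk, _, rfl, rfl⟩, ⟨_, rfl, l, hl, hkl⟩⟩
    have : k ≤ a := le_csSup hK.bddAbove hk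
    have : b ≤ l := csInf_le hL.bddBelow hl
    rw [mem_singleton_iff]
    linarith
  calc volume K + volume L = volume (K + {b}) + volume ({a} + L) := by
        rw [add_singleton, singleton_add, image_add_right, image_add_left,
          measure_preimage_add_right, measure_preimage_add]
    _ = volume ((K + {b}) ∪ ({a} + L)) + volume ((K + {b}) ∩ ({a} + L)) :=
        (measure_union_add_inter _ (isCompact_singleton.add hL).measurableSet).symm
    _ ≤ volume (K + L) + volume {a + b} :=
        add_le_add (measure_mono (union_subset (add_subset_add_left (singleton_subset_iff.2 hb))
          (add_subset_add_right (singleton_subset_iff.2 ha)))) (measure_mono hinter)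
    _ = volume (K + L) := by rw [Real.volume_singleton, add_zero]

theorem Real.volume_add_volume_le_volume_add {s t : Set ℝ} (hs : MeasurableSet s)
    (ht : MeasurableSet t) (hs₀ : s.Nonempty) (ht₀ : t.Nonempty) :
    volume s + volume t ≤ volume (s + t) := by
  obtain ⟨a, ha⟩ := hs₀
  obtain ⟨b, hb⟩ := ht₀
  rw [hs.measure_eq_iSup_isCompact, ht.measure_eq_iSup_isCompact]
  simp only [iSup_and']
  refine ENNReal.biSup_add_biSup_le' ⟨∅, empty_subset _, isCompact_empty⟩
    ⟨∅, empty_subset _, isCompact_empty⟩ fun K ⟨hKs, hK⟩ L ⟨hLt, hL⟩ => ?_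
  calc volume K + volume L ≤ volume (insert a K) + volume (insert b L) :=
        add_le_add (measure_mono (subset_insert _ _)) (measure_mono (subset_insert _ _))
    _ ≤ volume (insert a K + insert b L) :=
        volume_add_volume_le_volume_add_of_isCompact (hK.insert a) (hL.insert b)
          (insert_nonempty _ _) (insert_nonempty _ _)
    _ ≤ volume (s + t) :=
        measure_mono (add_subset_add (insert_subset ha hKs) (insert_subset hb hLt))

theorem Real.ofReal_mul_volume_add_ofReal_mul_volume_le {a b : ℝ} (ha : 0 ≤ a) (hb : 0 ≤ b)
    {s t : Set ℝ} (hs : MeasurableSet s) (ht : MeasurableSet t) (hs₀ : s.Nonempty)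
    (ht₀ : t.Nonempty) :
    ENNReal.ofReal a * volume s + ENNReal.ofReal b * volume t ≤ volume (a • s + b • t) := by
  simpa [Measure.addHaar_smul_of_nonneg _ ha, Measure.addHaar_smul_of_nonneg _ hb] using
    volume_add_volume_le_volume_add (hs.const_smul₀ a) (ht.const_smul₀ b) (hs₀.smul_set)
      (ht₀.smul_set)

theorem Real.volume_superlevelSet_prekopa_leindler {t : ℝ} (h0 : 0 < t) (h1 : t < 1)
    {f g h : ℝ → ℝ≥0∞} (hf : Measurable f) (hg : Measurable g)
    (hfgh : ∀ x y, f x ^ (1 - t) * g y ^ t ≤ h ((1 - t) * x + t * y)) {r₁ r₂ : ℝ≥0∞}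
    (hr₁ : ∃ x, r₁ < f x) (hr₂ : ∃ y, r₂ < g y) :
    ENNReal.ofReal (1 - t) * volume {x | r₁ < f x} + ENNReal.ofReal t * volume {y | r₂ < g y} ≤
      volume {z | r₁ ^ (1 - t) * r₂ ^ t < h z} := by
  have h1t : 0 < 1 - t := by linarith
  refine (ofReal_mul_volume_add_ofReal_mul_volume_le h1t.le h0.le
    (measurableSet_lt measurable_const hf) (measurableSet_lt measurable_const hg) hr₁ hr₂).trans
    (measure_mono ?_)
  rintro _ ⟨_, ⟨x, hx, rfl⟩, _, ⟨y, hy, rfl⟩, rfl⟩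
  exact (ENNReal.mul_lt_mul (ENNReal.rpow_lt_rpow hx h1t) (ENNReal.rpow_lt_rpow hy h0)).trans_le
    (hfgh x y)

theorem ENNReal.geom_mean_le_arith_mean2_weighted {t : ℝ} (h0 : 0 ≤ t) (h1 : t ≤ 1)
    (a b : ℝ≥0∞) : a ^ (1 - t) * b ^ t ≤ ENNReal.ofReal (1 - t) * a + ENNReal.ofReal t * b := by
  rcases h1.eq_or_lt with rfl | h1
  · simp
  rcases h0.eq_or_lt with rfl | h0
  · simp
  have h1t : 0 < 1 - t := by linarith
  rcases eq_or_ne a ⊤ with rfl | ha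
  · simp [ENNReal.mul_top, h1]
  rcases eq_or_ne b ⊤ with rfl | hb
  · simp [ENNReal.mul_top, h0]
  lift a to ℝ≥0 using ha
  lift b to ℝ≥0 using hb
  have := NNReal.geom_mean_le_arith_mean2_weighted (1 - t).toNNReal t.toNNReal a b
    (by ext; simp [h1t.le, h0.le])
  rw [Real.coe_toNNReal _ h1t.le, Real.coe_toNNReal _ h0.le] at this
  rw [← ENNReal.coe_rpow_of_nonneg _ h1t.le, ← ENNReal.coe_rpow_of_nonneg _ h0.le]
  rw [ENNReal.ofReal, ENNReal.ofReal]
  exact_mod_cast this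

theorem lintegral_eq_mul_lintegral_meas_lt {α : Type*} [MeasurableSpace α] (μ : Measure α)
    {f : α → ℝ≥0∞} (hf : Measurable f) (hf_top : ∀ x, f x ≠ ⊤) {c : ℝ≥0∞} (hc₀ : c ≠ 0)
    (hc : c ≠ ⊤) :
    ∫⁻ x, f x ∂μ = c * ∫⁻ s in Ioi 0, μ {x | ENNReal.ofReal s * c < f x} := by
  have hfc : ∀ x, f x / c ≠ ⊤ := fun x => ENNReal.div_ne_top (hf_top x) hc₀
  have hlevel : ∀ s ∈ Ioi (0 : ℝ),
      μ {x | s < (f x / c).toReal} = μ {x | ENNReal.ofReal s * c < f x} := fun s hs => by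
    congr 1
    ext x
    rw [mem_ofPred_eq, mem_ofPred_eq, ← ENNReal.ofReal_lt_iff_lt_toReal (le_of_lt hs) (hfc x),
      ENNReal.lt_div_iff_mul_lt (Or.inl hc₀) (Or.inl hc)]
  calc ∫⁻ x, f x ∂μ = c * ∫⁻ x, ENNReal.ofReal (f x / c).toReal ∂μ := by
        simp_rw [ENNReal.ofReal_toReal (hfc _)]
        rw [← lintegral_const_mul _ (hf.div_const c)]
        simp_rw [ENNReal.mul_div_cancel hc₀ hc]
    _ = c * ∫⁻ s in Ioi 0, μ {x | ENNReal.ofReal s * c < f x} := by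
        rw [lintegral_eq_lintegral_meas_lt μ (Filter.Eventually.of_forall fun _ => by positivity)
          (hf.div_const c).ennreal_toReal.aemeasurable,
          setLIntegral_congr_fun measurableSet_Ioi hlevel]

theorem Real.lintegral_volume_superlevelSet_prekopa_leindler {t : ℝ} (h0 : 0 < t) (h1 : t < 1)
    {f g h : ℝ → ℝ≥0∞} (hf : Measurable f) (hg : Measurable g)
    (hfgh : ∀ x y, f x ^ (1 - t) * g y ^ t ≤ h ((1 - t) * x + t * y)) {a b : ℝ≥0∞}
    (hfa : ⨆ x, f x = a) (hgb : ⨆ x, g x = b) (ha₀ : a ≠ 0) (ha : a ≠ ⊤) (hb₀ : b ≠ 0)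
    (hb : b ≠ ⊤) :
    ENNReal.ofReal (1 - t) * (∫⁻ s in Ioi 0, volume {x | ENNReal.ofReal s * a < f x}) +
        ENNReal.ofReal t * (∫⁻ s in Ioi 0, volume {x | ENNReal.ofReal s * b < g x}) ≤
      ∫⁻ s in Ioi 0, volume {x | ENNReal.ofReal s * (a ^ (1 - t) * b ^ t) < h x} := by
  have h1t : 0 < 1 - t := by linarith
  -- Normalising the heights by the suprema makes the superlevel sets below height `1`
  -- nonempty, and those above it empty.
  have hlevel : ∀ s ∈ Ioi (0 : ℝ),
      ENNReal.ofReal (1 - t) * volume {x | ENNReal.ofReal s * a < f x} +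
          ENNReal.ofReal t * volume {x | ENNReal.ofReal s * b < g x} ≤
        volume {x | ENNReal.ofReal s * (a ^ (1 - t) * b ^ t) < h x} := by
    intro s _
    rcases le_or_gt 1 s with hs1 | hs1
    · have hsup : ∀ {φ : ℝ → ℝ≥0∞} {r : ℝ≥0∞}, ⨆ x, φ x = r →
          {x | ENNReal.ofReal s * r < φ x} = ∅ := fun hφ => eq_empty_of_forall_notMem fun x hx =>
        (hφ ▸ le_iSup _ x).not_gt
          (hx.trans_le' (le_mul_of_one_le_left' (ENNReal.one_le_ofReal.2 hs1)))
      simp [hsup hfa, hsup hgb]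
    have hlt : ∀ {r : ℝ≥0∞}, r ≠ 0 → r ≠ ⊤ → ENNReal.ofReal s * r < r := fun h₀ h_top => by
      simpa using ENNReal.mul_lt_mul_left h₀ h_top (ENNReal.ofReal_lt_one.2 hs1)
    have hc : (ENNReal.ofReal s * a) ^ (1 - t) * (ENNReal.ofReal s * b) ^ t =
        ENNReal.ofReal s * (a ^ (1 - t) * b ^ t) := by
      rw [ENNReal.mul_rpow_of_nonneg _ _ h1t.le, ENNReal.mul_rpow_of_nonneg _ _ h0.le,
        mul_mul_mul_comm, ← ENNReal.rpow_add_of_nonneg _ _ h1t.le h0.le, sub_add_cancel,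
        ENNReal.rpow_one]
    have := volume_superlevelSet_prekopa_leindler h0 h1 hf hg hfgh
      (lt_iSup_iff.1 (by rw [hfa]; exact hlt ha₀ ha))
      (lt_iSup_iff.1 (by rw [hgb]; exact hlt hb₀ hb))
    rwa [hc] at this
  calc _ = (∫⁻ s in Ioi 0, ENNReal.ofReal (1 - t) * volume {x | ENNReal.ofReal s * a < f x}) +
        ∫⁻ s in Ioi 0, ENNReal.ofReal t * volume {x | ENNReal.ofReal s * b < g x} := by
        rw [lintegral_const_mul' _ _ ENNReal.ofReal_ne_top,
          lintegral_const_mul' _ _ ENNReal.ofReal_ne_top]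
    _ ≤ _ := le_lintegral_add _ _
    _ ≤ _ := setLIntegral_mono' measurableSet_Ioi hlevel

theorem Real.prekopa_leindler_of_bounded {t : ℝ} (h0 : 0 < t) (h1 : t < 1) {f g h : ℝ → ℝ≥0∞}
    (hf : Measurable f) (hg : Measurable g) (hh : Measurable h) (hf_top : ⨆ x, f x ≠ ⊤)
    (hg_top : ⨆ x, g x ≠ ⊤) (hfgh : ∀ x y, f x ^ (1 - t) * g y ^ t ≤ h ((1 - t) * x + t * y)) :
    (∫⁻ x, f x) ^ (1 - t) * (∫⁻ x, g x) ^ t ≤ ∫⁻ x, h x := by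
  have h1t : 0 < 1 - t := by linarith
  set a := ⨆ x, f x with hfa
  set b := ⨆ x, g x with hgb
  rcases eq_or_ne a 0 with ha₀ | ha₀
  · simp [funext (ENNReal.iSup_eq_zero.1 ha₀), h1t]
  rcases eq_or_ne b 0 with hb₀ | hb₀
  · simp [funext (ENNReal.iSup_eq_zero.1 hb₀), h0]
  set c := a ^ (1 - t) * b ^ t
  have hc₀ : c ≠ 0 := mul_ne_zero (ENNReal.rpow_pos (pos_iff_ne_zero.2 ha₀) hf_top).ne'
    (ENNReal.rpow_pos (pos_iff_ne_zero.2 hb₀) hg_top).ne'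
  have hc_top : c ≠ ⊤ := ENNReal.mul_ne_top (ENNReal.rpow_ne_top_of_nonneg h1t.le hf_top)
    (ENNReal.rpow_ne_top_of_nonneg h0.le hg_top)
  have hfgh' : ∀ x y, f x ^ (1 - t) * g y ^ t ≤ min (h ((1 - t) * x + t * y)) c := fun x y =>
    le_min (hfgh x y) (mul_le_mul' (ENNReal.rpow_le_rpow (le_iSup f x) h1t.le)
      (ENNReal.rpow_le_rpow (le_iSup g y) h0.le))
  calc (∫⁻ x, f x) ^ (1 - t) * (∫⁻ x, g x) ^ t
      = c * ((∫⁻ s in Ioi 0, volume {x | ENNReal.ofReal s * a < f x}) ^ (1 - t) *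
          (∫⁻ s in Ioi 0, volume {x | ENNReal.ofReal s * b < g x}) ^ t) := by
        rw [lintegral_eq_mul_lintegral_meas_lt volume hf
            (fun x => ne_top_of_le_ne_top hf_top (le_iSup f x)) ha₀ hf_top,
          lintegral_eq_mul_lintegral_meas_lt volume hg
            (fun x => ne_top_of_le_ne_top hg_top (le_iSup g x)) hb₀ hg_top,
          ENNReal.mul_rpow_of_nonneg _ _ h1t.le, ENNReal.mul_rpow_of_nonneg _ _ h0.le,
          mul_mul_mul_comm]
    _ ≤ c * ∫⁻ s in Ioi 0, volume {x | ENNReal.ofReal s * c < min (h x) c} :=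
        mul_le_mul_right ((ENNReal.geom_mean_le_arith_mean2_weighted h0.le h1.le _ _).trans
          (lintegral_volume_superlevelSet_prekopa_leindler h0 h1 hf hg hfgh' hfa.symm hgb.symm
            ha₀ hf_top hb₀ hg_top)) c
    _ = ∫⁻ x, min (h x) c := (lintegral_eq_mul_lintegral_meas_lt volume (hh.min measurable_const)
          (fun x => ne_top_of_le_ne_top hc_top (min_le_right _ c)) hc₀ hc_top).symm
    _ ≤ ∫⁻ x, h x := lintegral_mono fun x => min_le_left _ _

theorem Real.prekopa_leindler {t : ℝ} (h0 : 0 < t) (h1 : t < 1) {f g h : ℝ → ℝ≥0∞}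
    (hf : Measurable f) (hg : Measurable g) (hh : Measurable h)
    (hfgh : ∀ x y, f x ^ (1 - t) * g y ^ t ≤ h ((1 - t) * x + t * y)) :
    (∫⁻ x, f x) ^ (1 - t) * (∫⁻ x, g x) ^ t ≤ ∫⁻ x, h x := by
  have h1t : 0 < 1 - t := by linarith
  have htrunc : ∀ {φ : ℝ → ℝ≥0∞}, Measurable φ → ∫⁻ x, φ x = ⨆ k : ℕ, ∫⁻ x, min (φ x) k :=
    fun hφ => by
      rw [← lintegral_iSup (fun k => hφ.min measurable_const)
        fun i j hij x => min_le_min le_rfl (by exact_mod_cast hij)]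
      simp_rw [← inf_iSup_eq, ENNReal.iSup_natCast, inf_top_eq]
  have hpow : ∀ {p : ℝ} (hp : 0 < p) (u : ℕ → ℝ≥0∞), (⨆ k, u k) ^ p = ⨆ k, u k ^ p :=
    fun hp u => (ENNReal.orderIsoRpow _ hp).map_iSup u
  rw [htrunc hf, htrunc hg, hpow h1t, hpow h0, ENNReal.iSup_mul, iSup_le_iff]
  intro k
  rw [ENNReal.mul_iSup, iSup_le_iff]
  intro j
  refine prekopa_leindler_of_bounded h0 h1 (hf.min measurable_const) (hg.min measurable_const) hh
    (ne_top_of_le_ne_top (ENNReal.natCast_ne_top k) (iSup_le fun _ => min_le_right _ _))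
    (ne_top_of_le_ne_top (ENNReal.natCast_ne_top j) (iSup_le fun _ => min_le_right _ _))
    fun x y => (hfgh x y).trans' ?_
  gcongr <;> exact min_le_left _ _

theorem lintegral_fin_cons {d : ℕ} {φ : (Fin (d + 1) → ℝ) → ℝ≥0∞} (hφ : Measurable φ) :
    ∫⁻ x, φ x = ∫⁻ c, ∫⁻ z, φ (Fin.cons c z) := by
  rw [← ((volume_preserving_piFinSuccAbove (fun _ : Fin (d + 1) => ℝ) 0).symm _).lintegral_comp hφ,
    Measure.volume_eq_prod, lintegral_prod _ (by fun_prop)]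
  simp [MeasurableEquiv.piFinSuccAbove_symm_apply, Fin.insertNthEquiv]

theorem Fin.smul_cons_add_smul_cons {d : ℕ} (a b c₁ c₂ : ℝ) (z w : Fin d → ℝ) :
    a • (Fin.cons c₁ z : Fin (d + 1) → ℝ) + b • Fin.cons c₂ w =
      Fin.cons (a * c₁ + b * c₂) (a • z + b • w) := by
  ext i
  refine Fin.cases ?_ (fun _ => ?_) i <;> simp

theorem prekopa_leindler_pi {d : ℕ} {t : ℝ} (h0 : 0 < t) (h1 : t < 1)
    {f g h : (Fin d → ℝ) → ℝ≥0∞} (hf : Measurable f) (hg : Measurable g) (hh : Measurable h)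
    (hfgh : ∀ x y, f x ^ (1 - t) * g y ^ t ≤ h ((1 - t) • x + t • y)) :
    (∫⁻ x, f x) ^ (1 - t) * (∫⁻ x, g x) ^ t ≤ ∫⁻ x, h x := by
  induction d with
  | zero =>
    simp only [lintegral_unique, volume_pi, Measure.pi_univ, Finset.univ_eq_empty,
      Finset.prod_empty, mul_one]
    convert hfgh default default
  | succ d ih =>
    rw [lintegral_fin_cons hf, lintegral_fin_cons hg, lintegral_fin_cons hh]
    refine Real.prekopa_leindler h0 h1 (by fun_prop) (by fun_prop) (by fun_prop)
      fun c₁ c₂ => ih (by fun_prop) (by fun_prop) (by fun_prop) fun z w => ?_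
    simpa [Fin.smul_cons_add_smul_cons] using hfgh (Fin.cons c₁ z) (Fin.cons c₂ w)

theorem brunn_minkowski_pi {d : ℕ} {t : ℝ} (h0 : 0 < t) (h1 : t < 1) {A B : Set (Fin d → ℝ)}
    (hA : MeasurableSet A) (hB : MeasurableSet B) :
    volume A ^ (1 - t) * volume B ^ t ≤ volume ((1 - t) • A + t • B) := by
  have h1t : 0 < 1 - t := by linarith
  set S := toMeasurable volume ((1 - t) • A + t • B)
  have key := prekopa_leindler_pi h0 h1 (f := A.indicator 1) (g := B.indicator 1)
    (h := S.indicator 1) (measurable_one.indicator hA) (measurable_one.indicator hB)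
    (measurable_one.indicator (measurableSet_toMeasurable _ _)) fun x y => by
      by_cases hx : x ∈ A
      · by_cases hy : y ∈ B
        · have hS : (1 - t) • x + t • y ∈ S := subset_toMeasurable _ _
            (add_mem_add (smul_mem_smul_set hx) (smul_mem_smul_set hy))
          simp [hx, hy, hS]
        · simp [hy, h0]
      · simp [hx, h1t]
  simpa [lintegral_indicator_one, hA, hB, measurableSet_toMeasurable, S] using key

theorem EuclideanSpace.volume_le_volume_closedBall_diam_div_two {d : ℕ}
    {s : Set (EuclideanSpace ℝ (Fin d))} (hs : Bornology.IsBounded s) :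
    volume s ≤ volume (Metric.closedBall (0 : EuclideanSpace ℝ (Fin d)) (Metric.diam s / 2)) := by
  set e := (MeasurableEquiv.toLp 2 (Fin d → ℝ)).symm
  have he : MeasurePreserving e := EuclideanSpace.volume_preserving_symm_measurableEquiv_toLp _
  set A := e '' closure s
  have hA : MeasurableSet A := e.measurableSet_image.2 isClosed_closure.measurableSet
  have hBM : volume A ≤ volume ((1 - 2⁻¹ : ℝ) • A + (2⁻¹ : ℝ) • -A) := by
    have := brunn_minkowski_pi (t := 2⁻¹) (by norm_num) (by norm_num) hA hA.neg
    rwa [Measure.measure_neg, ← ENNReal.rpow_add_of_nonneg _ _ (by norm_num) (by norm_num),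
      show (1 - 2⁻¹ + 2⁻¹ : ℝ) = 1 by ring, ENNReal.rpow_one] at this
  have hsub : e ⁻¹' ((1 - 2⁻¹ : ℝ) • A + (2⁻¹ : ℝ) • -A) ⊆
      Metric.closedBall 0 (Metric.diam s / 2) := by
    rintro z ⟨_, ⟨_, ⟨x, hx, rfl⟩, rfl⟩, _, ⟨_, hy, rfl⟩, hz⟩
    obtain ⟨y, hy, hy'⟩ := hy
    obtain rfl := (neg_eq_iff_eq_neg.2 hy').symm
    have hz' : z = (2⁻¹ : ℝ) • (x - y) := by
      apply e.injective
      rw [← hz]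
      simp only [MeasurableEquiv.toLp_symm_apply, smul_neg, WithLp.ofLp_smul, WithLp.ofLp_sub, e]
      module
    have := Metric.dist_le_diam_of_mem hs.closure hx hy
    rw [Metric.diam_closure, dist_eq_norm] at this
    rw [mem_closedBall_zero_iff, hz', norm_smul]
    norm_num
    linarith
  calc volume s ≤ volume (closure s) := measure_mono subset_closure
    _ = volume A := by rw [← he.measure_preimage_equiv, e.preimage_image]
    _ ≤ _ := hBM
    _ = volume (e ⁻¹' ((1 - 2⁻¹ : ℝ) • A + (2⁻¹ : ℝ) • -A)) := (he.measure_preimage_equiv _).symm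
    _ ≤ _ := measure_mono hsub

theorem EuclideanSpace.two_pow_le_hausdorffMeasure_closedBall (d : ℕ) :
    (2 : ℝ≥0∞) ^ d ≤ μH[d] (Metric.closedBall (0 : EuclideanSpace ℝ (Fin d)) 1) := by
  set V := volume (Metric.closedBall (0 : EuclideanSpace ℝ (Fin d)) 1)
  have hV₀ : V ≠ 0 := (Metric.measure_closedBall_pos _ _ one_pos).ne'
  have hV_top : V ≠ ⊤ := measure_closedBall_lt_top.ne
  have key : ∀ s : Set (EuclideanSpace ℝ (Fin d)), Metric.ediam s ≤ 1 →
      2 ^ d * volume s ≤ V * Metric.ediam s ^ (d : ℝ) := fun s hs => by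
    have hs_top : Metric.ediam s ≠ ⊤ := ne_top_of_le_ne_top ENNReal.one_ne_top hs
    calc 2 ^ d * volume s
        ≤ 2 ^ d * volume (Metric.closedBall (0 : EuclideanSpace ℝ (Fin d)) (Metric.diam s / 2)) :=
          mul_le_mul_right (volume_le_volume_closedBall_diam_div_two
            (Metric.isBounded_iff_ediam_ne_top.2 hs_top)) _
      _ = V * ENNReal.ofReal (Metric.diam s ^ d) := by
          rw [Measure.addHaar_closedBall' _ _ (by positivity), finrank_euclideanSpace_fin,
            show (2 : ℝ≥0∞) ^ d = ENNReal.ofReal (2 ^ d) by simp, ← mul_assoc,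
            ← ENNReal.ofReal_mul (by positivity), ← mul_pow, mul_div_cancel₀ _ two_ne_zero,
            mul_comm]
      _ = V * Metric.ediam s ^ (d : ℝ) := by
          rw [Metric.diam, ENNReal.ofReal_pow ENNReal.toReal_nonneg,
            ENNReal.ofReal_toReal hs_top, ENNReal.rpow_natCast]
  have hle : (V⁻¹ * 2 ^ d) • (volume : Measure (EuclideanSpace ℝ (Fin d))) ≤ μH[d] :=
    Measure.le_hausdorffMeasure _ _ 1 one_pos fun s hs => by
      rw [Measure.smul_apply, smul_eq_mul, mul_assoc]
      calc V⁻¹ * (2 ^ d * volume s) ≤ V⁻¹ * (V * Metric.ediam s ^ (d : ℝ)) :=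
            mul_le_mul_right (key s hs) _
        _ = _ := by rw [← mul_assoc, ENNReal.inv_mul_cancel hV₀ hV_top, one_mul]
  calc (2 : ℝ≥0∞) ^ d = (V⁻¹ * 2 ^ d) * V := by
        rw [mul_comm, ← mul_assoc, ENNReal.mul_inv_cancel hV₀ hV_top, one_mul]
    _ ≤ μH[d] (Metric.closedBall (0 : EuclideanSpace ℝ (Fin d)) 1) := hle _

theorem LinearMap.finrank_sub_finrank_le_finrank_ker {K V W : Type*} [DivisionRing K]
    [AddCommGroup V] [Module K V] [AddCommGroup W] [Module K W] [FiniteDimensional K V]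
    [FiniteDimensional K W] (T : V →ₗ[K] W) :
    Module.finrank K V - Module.finrank K W ≤ Module.finrank K (LinearMap.ker T) := by
  have := T.finrank_range_add_finrank_ker
  have := (LinearMap.range T).finrank_le
  omega

theorem exists_linearIsometry_euclideanSpace {E : Type*} [NormedAddCommGroup E]
    [InnerProductSpace ℝ E] [FiniteDimensional ℝ E] {d : ℕ} (hd : d ≤ Module.finrank ℝ E) :
    Nonempty (EuclideanSpace ℝ (Fin d) →ₗᵢ[ℝ] E) := by
  let b := EuclideanSpace.basisFun (Fin d) ℝ
  let u : Fin d → E := fun i => stdOrthonormalBasis ℝ E (Fin.castLE hd i)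
  have hu : Orthonormal ℝ u :=
    (stdOrthonormalBasis ℝ E).orthonormal.comp _ (Fin.castLE_injective hd)
  have hb : Orthonormal ℝ b.toBasis := by rw [b.coe_toBasis]; exact b.orthonormal
  have hbu : Orthonormal ℝ (b.toBasis.constr ℝ u ∘ b.toBasis) := by
    convert hu
    exact funext (b.toBasis.constr_basis ℝ u)
  exact ⟨(b.toBasis.constr ℝ u).isometryOfOrthonormal hb hbu⟩

theorem cubeSection_subset_knap_sub_one {m n : ℕ} (A : Matrix (Fin m) (Fin n) ℤ) :
    {x : Fin n → ℝ | (∀ i, |x i| ≤ 1) ∧ (Rmat A).mulVec x = 0} ⊆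
      (fun x => x - fun _ => (1 : ℝ)) '' knap A (vA A) := by
  rintro x ⟨hx, hAx⟩
  refine ⟨x + fun _ => 1, ⟨fun i => ?_, ?_⟩, add_sub_cancel_right _ _⟩
  · have := (abs_le.1 (hx i)).1
    simp only [Pi.add_apply]
    linarith
  · rw [Matrix.mulVec_add, hAx, zero_add, vA]

theorem toLp_one_add_mem_knap {m n : ℕ} (A : Matrix (Fin m) (Fin n) ℤ)
    {x : EuclideanSpace ℝ (Fin n)} (hx : ‖x‖ ≤ 1) (hAx : (Rmat A).mulVec x = 0) :
    WithLp.toLp 2 (fun _ => 1) + x ∈ ⇑(EuclideanSpace.equiv (Fin n) ℝ).symm '' knap A (vA A) := by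
  obtain ⟨w, hw, hwx⟩ := cubeSection_subset_knap_sub_one A
    ⟨fun i => (PiLp.norm_apply_le x i).trans hx, hAx⟩
  refine ⟨w, hw, ?_⟩
  rw [← sub_add_cancel w fun _ => 1, show (w - fun _ => 1) = x.ofLp from hwx]
  ext i
  simp [add_comm]

theorem stmt_15_general {m n : ℕ} (hmn : m < n)
    (A : Matrix (Fin m) (Fin n) ℤ) :
    {x : Fin n → ℝ | (∀ i, |x i| ≤ 1) ∧ (Rmat A).mulVec x = 0} ⊆
        (fun x => x - fun _ => (1 : ℝ)) '' knap A (vA A) ∧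
      μH[((n : ℝ) - m)] (⇑(EuclideanSpace.equiv (Fin n) ℝ).symm '' knap A (vA A)) ≥
        2 ^ (n - m) := by
  refine ⟨cubeSection_subset_knap_sub_one A, ?_⟩
  rw [← Nat.cast_sub hmn.le]
  set d := n - m
  let T := (Rmat A).mulVecLin ∘ₗ (EuclideanSpace.equiv (Fin n) ℝ).toLinearMap
  obtain ⟨φ⟩ := exists_linearIsometry_euclideanSpace (E := LinearMap.ker T) (d := d)
    (by simpa [d] using T.finrank_sub_finrank_le_finrank_ker)
  let g (y : EuclideanSpace ℝ (Fin d)) : EuclideanSpace ℝ (Fin n) :=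
    WithLp.toLp 2 (fun _ => 1) + (φ y : EuclideanSpace ℝ (Fin n))
  have hg : Isometry g :=
    (IsometryEquiv.addLeft _).isometry.comp (isometry_subtype_coe.comp φ.isometry)
  have hball : g '' Metric.closedBall 0 1 ⊆
      ⇑(EuclideanSpace.equiv (Fin n) ℝ).symm '' knap A (vA A) := by
    rintro _ ⟨y, hy, rfl⟩
    exact toLp_one_add_mem_knap A ((φ.norm_map y).trans_le (mem_closedBall_zero_iff.1 hy)) (φ y).2
  calc (2 : ℝ≥0∞) ^ d ≤ μH[d] (Metric.closedBall (0 : EuclideanSpace ℝ (Fin d)) 1) :=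
        EuclideanSpace.two_pow_le_hausdorffMeasure_closedBall d
    _ = μH[d] (g '' Metric.closedBall 0 1) :=
        (hg.hausdorffMeasure_image (Or.inl d.cast_nonneg) _).symm
    _ ≤ _ := measure_mono hball

/-- P(A,v) − 1 contains the central cube section [−1,1]ⁿ ∩ ker A, and hence the
(n−m)-dimensional volume (Hausdorff measure in the Euclidean metric) of P(A,v)
is at least 2^(n−m). -/
theorem stmt_15 {m n : ℕ} (hm : 1 ≤ m) (hmn : m < n)
    (A : Matrix (Fin m) (Fin n) ℤ) (hA : regular A) :
    {x : Fin n → ℝ | (∀ i, |x i| ≤ 1) ∧ (Rmat A).mulVec x = 0} ⊆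
        (fun x => x - fun _ => (1 : ℝ)) '' knap A (vA A) ∧
      μH[((n : ℝ) - m)] (⇑(EuclideanSpace.equiv (Fin n) ℝ).symm '' knap A (vA A)) ≥
        2 ^ (n - m) :=
  stmt_15_general hmn A

end
end

section
/- Let A ∈ ℤ^{(n−1)×n} satisfy the regularity assumptions (so m = n−1), let z ∈ ℤ^n be a primitive integral vector generating the one-dimensional lattice {x ∈ ℤ^n : A x = 0}, let a_1, …, a_n ∈ ℤ^{n−1} be the columns of A, and set u = Σ_{i : z_i ≥ 0} z_i a_i. Then g_1(A) = min{γ ∈ ℝ, γ ≥ 0 : γ·v ∈ C + u − v}, where C is the cone generated by the columns of A and v = A·1. -/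
/-!
Bézout's identity on the maximal minors makes `x ↦ A x` surjective from `ℤ^{n+1}` onto `ℤ^n`, and
the real and integer kernels of `A` are `ℝ z` and `ℤ z`. Writing an integer right-hand side as
`b = A x`, the point `b` lies in the interior of `t v + C` iff `x + s z > t` for some real `s`, and
`b ∈ F₁(A)` iff `x + c z ≥ 0` for some integer `c`; likewise `γ v ∈ C + u - v` iff
`z⁺ + s z ≤ γ + 1` for some real `s`. By one-dimensional Helly both conditions reduce to pairs of
coordinates `z i > 0 > z j`, and for each pair both say `z i * |z j| ≤ (t + 1) * (z i + |z j|)`: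
for the integer condition, `c = ⌊x j / |z j|⌋` works when the bound holds, and
`x = (-1, |z j| - 1)` is a counterexample when it fails.
-/

open scoped BigOperators
open Matrix

noncomputable section

section LinearAlgebra

variable {R : Type*} [CommRing R] {m n : Type*} [Fintype m] [Fintype n]

lemma Matrix.mulVec_extend_zero (B : Matrix m n R) (e : m ↪ n) (y : m → R) :
    B *ᵥ Function.extend e y 0 = B.submatrix id e *ᵥ y := by
  classical
  funext r
  simp only [mulVec, dotProduct, submatrix_apply, id]
  rw [← Finset.sum_subset (Finset.subset_univ (Finset.univ.map e)), Finset.sum_map]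
  · simp only [e.injective.extend_apply]
  · intro i _ hi
    rw [Function.extend_apply' _ _ _ (by simpa using hi), Pi.zero_apply, mul_zero]

lemma Matrix.det_submatrix_smul_mem_range [DecidableEq m] (B : Matrix m n R) (e : m ↪ n)
    (b : m → R) :
    (B.submatrix id e).det • b ∈ LinearMap.range B.mulVecLin :=
  ⟨Function.extend e ((B.submatrix id e).adjugate *ᵥ b) 0, by
    rw [mulVecLin_apply, mulVec_extend_zero, mulVec_mulVec, mul_adjugate, smul_mulVec,
      one_mulVec]⟩

lemma Matrix.mulVec_surjective_of_gcd_det_eq_one [IsBezout R] [NormalizedGCDMonoid R]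
    [DecidableEq m] [DecidableEq n] {B : Matrix m n R}
    (h : Finset.univ.gcd (fun e : m ↪ n => (B.submatrix id e).det) = 1) :
    Function.Surjective B.mulVec := by
  intro b
  obtain ⟨g, hg⟩ := Finset.univ.gcd_eq_sum_mul fun e : m ↪ n => (B.submatrix id e).det
  show b ∈ LinearMap.range B.mulVecLin
  rw [← one_smul R b, ← h, hg, Finset.sum_smul]
  refine Submodule.sum_mem _ fun e _ => ?_
  rw [mul_comm, mul_smul]
  exact Submodule.smul_mem _ _ (det_submatrix_smul_mem_range B e b)

lemma Matrix.mulVec_eq_zero_iff_exists_smul {K : Type*} [Field K] (B : Matrix m n K)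
    (hcard : Fintype.card n = Fintype.card m + 1) (hB : Function.Surjective B.mulVec)
    {z : n → K} (hz0 : z ≠ 0) (hz : B *ᵥ z = 0) (w : n → K) :
    B *ᵥ w = 0 ↔ ∃ s : K, w = s • z := by
  refine ⟨fun hw => ?_, ?_⟩
  · have hker : Module.finrank K (LinearMap.ker B.mulVecLin) = 1 := by
      have := LinearMap.finrank_range_add_finrank_ker B.mulVecLin
      rw [LinearMap.range_eq_top.2 hB, finrank_top, Module.finrank_fintype_fun_eq_card,
        Module.finrank_fintype_fun_eq_card, hcard] at this
      omega
    obtain ⟨s, hs⟩ := (finrank_eq_one_iff_of_nonzero' (⟨z, hz⟩ : LinearMap.ker B.mulVecLin)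
      fun h => hz0 (congrArg Subtype.val h)).1 hker ⟨w, hw⟩
    exact ⟨s, congrArg Subtype.val hs.symm⟩
  · rintro ⟨s, rfl⟩
    rw [mulVec_smul, hz, smul_zero]

end LinearAlgebra

section RealMatrix

open Filter Topology

variable {m n : ℕ} (A : Matrix (Fin m) (Fin n) ℤ)

lemma rvec_eq_zero_iff {x : Fin m → ℤ} : Rvec x = 0 ↔ x = 0 := by
  simp [funext_iff, Rvec]

lemma rmat_mulVec_rvec (x : Fin n → ℤ) : Rmat A *ᵥ Rvec x = Rvec (A *ᵥ x) :=
  funext fun i => (RingHom.map_mulVec (Int.castRingHom ℝ) A x i).symm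

lemma rmat_mulVec_posPart (z : Fin n → ℤ) :
    Rmat A *ᵥ (fun i => max (z i : ℝ) 0) =
      Rvec (fun j => ∑ i, if 0 ≤ z i then z i * A j i else 0) := by
  funext j
  simp only [Matrix.mulVec, dotProduct, Rmat, Matrix.map_apply, Rvec]
  push_cast
  refine Finset.sum_congr rfl fun i _ => ?_
  split_ifs with h
  · rw [max_eq_left (by exact_mod_cast h), mul_comm]
  · rw [max_eq_right (by exact_mod_cast (not_le.1 h).le), mul_zero]

lemma rmat_mulVec_surjective (hA : Function.Surjective A.mulVec) :
    Function.Surjective (Rmat A).mulVec := by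
  rw [← Matrix.coe_mulVecLin, ← LinearMap.range_eq_top, eq_top_iff,
    ← (Pi.basisFun ℝ (Fin m)).span_eq, Submodule.span_le]
  rintro _ ⟨k, rfl⟩
  obtain ⟨x, hx⟩ := hA (Pi.single k 1)
  refine ⟨Rvec x, ?_⟩
  rw [Matrix.mulVecLin_apply, rmat_mulVec_rvec, hx]
  funext j
  simp [Rvec, Pi.single_apply]

lemma interior_coneOf (hA : Function.Surjective (Rmat A).mulVec) :
    interior (coneOf A) = (Rmat A).mulVec '' {y | ∀ i, 0 < y i} := by
  apply le_antisymm
  · intro x hx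
    -- an interior point stays in the cone after subtracting a small multiple of `A 1`
    have hnhds : ∀ᶠ δ in 𝓝 (0 : ℝ), x - δ • vA A ∈ interior (coneOf A) :=
      (show Continuous fun δ : ℝ => x - δ • vA A by fun_prop).tendsto' 0 x (by simp)
        |>.eventually (isOpen_interior.mem_nhds hx)
    have hpos : ∀ᶠ δ in 𝓝[>] (0 : ℝ), x - δ • vA A ∈ coneOf A :=
      (hnhds.filter_mono nhdsWithin_le_nhds).mono fun _ h => interior_subset h
    obtain ⟨δ, ⟨w, hw, hwx⟩, hδ⟩ := (hpos.and self_mem_nhdsWithin).exists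
    refine ⟨w + δ • 1, fun i => ?_, ?_⟩
    · simpa using add_pos_of_nonneg_of_pos (hw i) (Set.mem_Ioi.1 hδ)
    · rw [Matrix.mulVec_add, Matrix.mulVec_smul, hwx]
      exact sub_add_cancel x _
  · refine interior_maximal ?_ ?_
    · rintro _ ⟨y, hy, rfl⟩
      exact ⟨y, fun i => (hy i).le, rfl⟩
    · refine LinearMap.isOpenMap_of_finiteDimensional (Rmat A).mulVecLin hA _ ?_
      simp only [Set.ofPred_forall]
      exact isOpen_iInter_of_finite fun i => isOpen_lt continuous_const (continuous_apply i)

lemma mem_interior_vadd_coneOf_iff (hA : Function.Surjective (Rmat A).mulVec) (t : ℝ)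
    (b : Fin m → ℝ) :
    b ∈ interior ((fun c => t • vA A + c) '' coneOf A) ↔
      ∃ y, (∀ i, t < y i) ∧ Rmat A *ᵥ y = b := by
  rw [← Homeomorph.coe_addLeft, ← Homeomorph.image_interior, interior_coneOf A hA]
  constructor
  · rintro ⟨_, ⟨y, hy, rfl⟩, rfl⟩
    refine ⟨t • 1 + y, fun i => by simpa using hy i, ?_⟩
    rw [Matrix.mulVec_add, Matrix.mulVec_smul]
    rfl
  · rintro ⟨y, hy, rfl⟩
    refine ⟨_, ⟨y - t • 1, fun i => by simpa using hy i, rfl⟩, ?_⟩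
    rw [Homeomorph.coe_addLeft, Matrix.mulVec_sub, Matrix.mulVec_smul]
    exact add_sub_cancel _ _

end RealMatrix

lemma exists_forall_le_and_forall_le {α ι κ : Type*} [LinearOrder α] [Nonempty α] [Finite ι]
    [Finite κ] (l : ι → α) (u : κ → α) (h : ∀ i j, l i ≤ u j) :
    ∃ x, (∀ i, l i ≤ x) ∧ ∀ j, x ≤ u j := by
  rcases isEmpty_or_nonempty ι with hι | hι
  · rcases isEmpty_or_nonempty κ with hκ | hκ
    · exact ⟨Classical.arbitrary α, isEmptyElim, isEmptyElim⟩
    · obtain ⟨j, hj⟩ := Finite.exists_min u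
      exact ⟨u j, isEmptyElim, hj⟩
  · obtain ⟨i, hi⟩ := Finite.exists_max l
    exact ⟨l i, hi, h i⟩

lemma Int.neg_ediv_le_iff {a q c : ℤ} (hq : 0 < q) : -(a / q) ≤ c ↔ 0 ≤ a + c * q := by
  rw [neg_le, Int.le_ediv_iff_mul_le hq]
  constructor <;> intro h <;> linarith

lemma Int.le_ediv_neg_iff {b p c : ℤ} (hp : p < 0) : c ≤ b / -p ↔ 0 ≤ b + c * p := by
  rw [Int.le_ediv_iff_mul_le (neg_pos.2 hp)]
  constructor <;> intro h <;> linarith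

def PairwiseBound {ι : Type*} (z : ι → ℤ) (t : ℝ) : Prop :=
  ∀ i j, 0 < z i → z j < 0 → (z i : ℝ) * -(z j : ℝ) ≤ (t + 1) * (z i - z j)

section TwoCoordinates

variable {p q : ℤ} {t : ℝ}

lemma exists_int_shift_of_bound {a b : ℤ} {s : ℝ} (hq : 0 < q) (hp : p < 0)
    (hpq : (q : ℝ) * -(p : ℝ) ≤ (t + 1) * (q - p)) (ha : t < a + s * q) (hb : t < b + s * p) :
    ∃ c : ℤ, 0 ≤ a + c * q ∧ 0 ≤ b + c * p := by
  have hd : 0 < -p := neg_pos.2 hp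
  refine ⟨b / -p, ?_, (Int.le_ediv_neg_iff hp).1 le_rfl⟩
  -- with `b = -p * c + r`, `0 ≤ r ≤ -p - 1`, the bound gives `-p * (a + c * q) > p`
  have hdiv := Int.mul_ediv_add_emod b (-p)
  have hr : b % -p ≤ -p - 1 := by linarith [Int.emod_lt_of_pos b hd]
  have hR : ((-p * (b / -p) + b % -p : ℤ) : ℝ) = b := by exact_mod_cast hdiv
  have hrR : ((b % -p : ℤ) : ℝ) ≤ -p - 1 := by exact_mod_cast hr
  push_cast at hR
  have hqR : (0 : ℝ) < q := by exact_mod_cast hq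
  have hdR : (0 : ℝ) < -p := by exact_mod_cast hd
  have key : (p : ℝ) < -p * (a + (b / -p : ℤ) * q) := by
    nlinarith [mul_lt_mul_of_pos_left ha hdR, mul_lt_mul_of_pos_left hb hqR,
      mul_le_mul_of_nonneg_left hrR hqR.le]
  have : (-1 : ℝ) < a + (b / -p : ℤ) * q := by nlinarith
  have : (-1 : ℤ) < a + b / -p * q := by exact_mod_cast this
  omega

lemma exists_real_shift_of_not_bound (hq : 0 < q) (hp : p < 0)
    (hpq : (t + 1) * (q - p) < (q : ℝ) * -(p : ℝ)) :
    ∃ s : ℝ, t < (-1 : ℤ) + s * q ∧ t < (-p - 1 : ℤ) + s * p := by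
  have hqR : (0 : ℝ) < q := by exact_mod_cast hq
  have hpR : (p : ℝ) < 0 := by exact_mod_cast hp
  obtain ⟨s, h1, h2⟩ : ∃ s, (t + 1) / q < s ∧ s < (-p - 1 - t) / -p := by
    refine exists_between ?_
    rw [div_lt_div_iff₀ hqR (by linarith)]
    linarith
  rw [div_lt_iff₀ hqR] at h1
  rw [lt_div_iff₀ (by linarith)] at h2
  exact ⟨s, by push_cast; linarith, by push_cast; linarith⟩

lemma not_exists_int_shift (hq : 0 < q) (hp : p < 0) (c : ℤ) :
    ¬ (0 ≤ -1 + c * q ∧ 0 ≤ -p - 1 + c * p) := by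
  rintro ⟨h1, h2⟩
  have : 1 ≤ c := by nlinarith
  nlinarith

end TwoCoordinates

section Shifts

variable {ι : Type*} [Finite ι] (z : ι → ℤ)

lemma exists_real_shift_iff_pairwiseBound {γ : ℝ} (hγ : -1 ≤ γ) :
    (∃ s : ℝ, ∀ k, max (z k : ℝ) 0 + s * z k ≤ γ + 1) ↔ PairwiseBound z γ := by
  constructor
  · rintro ⟨s, hs⟩ i j hi hj
    have hiR : (0 : ℝ) < z i := by exact_mod_cast hi
    have hjR : (z j : ℝ) < 0 := by exact_mod_cast hj
    have h1 := hs i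
    have h2 := hs j
    rw [max_eq_left hiR.le] at h1
    rw [max_eq_right hjR.le] at h2
    nlinarith [mul_le_mul_of_nonneg_left h1 (neg_nonneg.2 hjR.le),
      mul_le_mul_of_nonneg_left h2 hiR.le]
  · intro h
    obtain ⟨s, hl, hu⟩ := exists_forall_le_and_forall_le
      (fun j : {j // z j < 0} => (γ + 1) / z j) (fun i : {i // 0 < z i} => (γ + 1) / z i - 1)
      fun ⟨j, hj⟩ ⟨i, hi⟩ => by
        have hiR : (0 : ℝ) < z i := by exact_mod_cast hi
        have hjR : (z j : ℝ) < 0 := by exact_mod_cast hj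
        have hij := h i j hi hj
        rw [div_le_iff_of_neg hjR]
        set w := (γ + 1) / z i
        have hw : γ + 1 = w * z i := (div_mul_cancel₀ _ hiR.ne').symm
        rw [hw] at hij ⊢
        nlinarith
    refine ⟨s, fun k => ?_⟩
    rcases lt_trichotomy (z k) 0 with hk | hk | hk
    · have hkR : (z k : ℝ) < 0 := by exact_mod_cast hk
      have := (div_le_iff_of_neg hkR).1 (hl ⟨k, hk⟩)
      rw [max_eq_right hkR.le]
      linarith
    · simp only [hk, Int.cast_zero, max_self, mul_zero, add_zero]
      linarith
    · have hkR : (0 : ℝ) < z k := by exact_mod_cast hk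
      have := le_sub_iff_add_le.1 (hu ⟨k, hk⟩)
      rw [le_div_iff₀ hkR] at this
      rw [max_eq_left hkR.le]
      linarith

lemma exists_real_shift_not_int_shift {t : ℝ} (h : ¬ PairwiseBound z t) :
    ∃ (x : ι → ℤ) (s : ℝ), (∀ k, t < x k + s * z k) ∧ ∀ c : ℤ, ∃ k, x k + c * z k < 0 := by
  classical
  simp only [PairwiseBound, not_forall, not_le] at h
  obtain ⟨i, j, hi, hj, hlt⟩ := h
  obtain ⟨s, hsi, hsj⟩ := exists_real_shift_of_not_bound hi hj hlt
  have hij : i ≠ j := fun hij => by rw [hij] at hi; omega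
  obtain ⟨T, hT⟩ : ∃ T : ℤ, ∀ k, t < T + s * z k := by
    have : Nonempty ι := ⟨i⟩
    obtain ⟨k₀, hk₀⟩ := Finite.exists_max fun k => t - s * z k
    obtain ⟨T, hT⟩ := exists_int_gt (t - s * z k₀)
    exact ⟨T, fun k => by linarith [hk₀ k]⟩
  refine ⟨Function.update (Function.update (fun _ => T) i (-1)) j (-z j - 1), s,
    fun k => ?_, fun c => ?_⟩
  · rcases eq_or_ne k j with rfl | hkj
    · simpa using hsj
    rcases eq_or_ne k i with rfl | hki
    · simpa [hkj] using hsi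
    · simpa [hkj, hki] using hT k
  · by_contra! hc
    refine not_exists_int_shift hi hj c ⟨?_, ?_⟩
    · simpa [hij] using hc i
    · simpa using hc j

lemma exists_int_shift_of_pairwiseBound {t : ℝ} (ht : -1 ≤ t) (h : PairwiseBound z t)
    (x : ι → ℤ) (s : ℝ) (hs : ∀ k, t < x k + s * z k) : ∃ c : ℤ, ∀ k, 0 ≤ x k + c * z k := by
  obtain ⟨c, hl, hu⟩ := exists_forall_le_and_forall_le
    (fun i : {i // 0 < z i} => -(x i / z i)) (fun j : {j // z j < 0} => x j / -z j)
    fun ⟨i, hi⟩ ⟨j, hj⟩ => by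
      obtain ⟨c, hci, hcj⟩ :=
        exists_int_shift_of_bound hi hj (h i j hi hj) (hs i) (hs j)
      exact ((Int.neg_ediv_le_iff hi).2 hci).trans ((Int.le_ediv_neg_iff hj).2 hcj)
  refine ⟨c, fun k => ?_⟩
  rcases lt_trichotomy (z k) 0 with hk | hk | hk
  · exact (Int.le_ediv_neg_iff hk).1 (hu ⟨k, hk⟩)
  · have : (-1 : ℝ) < x k := by simpa [hk] using ht.trans_lt (hs k)
    have : -1 < x k := by exact_mod_cast this
    simp only [hk, mul_zero, add_zero]
    omega
  · exact (Int.neg_ediv_le_iff hk).1 (hl ⟨k, hk⟩)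

lemma forall_exists_int_shift_iff_pairwiseBound {t : ℝ} (ht : -1 ≤ t) :
    (∀ (x : ι → ℤ) (s : ℝ), (∀ k, t < x k + s * z k) → ∃ c : ℤ, ∀ k, 0 ≤ x k + c * z k) ↔
      PairwiseBound z t := by
  refine ⟨fun H => ?_, exists_int_shift_of_pairwiseBound z ht⟩
  by_contra h
  obtain ⟨x, s, hs, hneg⟩ := exists_real_shift_not_int_shift z h
  obtain ⟨c, hc⟩ := H x s hs
  obtain ⟨k, hk⟩ := hneg c
  exact (hc k).not_gt hk

end Shifts

section Kernel

variable {m N : ℕ} {A : Matrix (Fin m) (Fin N) ℤ} {z : Fin N → ℤ}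

lemma exists_pos_of_mulVec_eq_zero
    (hpt : ∀ x : Fin N → ℝ, (∀ i, 0 ≤ x i) → Rmat A *ᵥ x = 0 → x = 0) (hz0 : z ≠ 0)
    (hz : A *ᵥ z = 0) : ∃ i, 0 < z i := by
  by_contra! h
  refine hz0 (neg_eq_zero.1 (rvec_eq_zero_iff.1 (hpt _ (fun i => ?_) ?_)))
  · simpa [Rvec] using h i
  · rw [rmat_mulVec_rvec, Matrix.mulVec_neg, hz, neg_zero, rvec_eq_zero_iff]

lemma finite_setOf_forall_nonneg_add_mul (x : Fin N → ℤ) (hpos : ∃ i, 0 < z i)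
    (hneg : ∃ j, z j < 0) : {c : ℤ | ∀ k, 0 ≤ x k + c * z k}.Finite := by
  obtain ⟨i, hi⟩ := hpos
  obtain ⟨j, hj⟩ := hneg
  refine (Set.finite_Icc (-|x i|) |x j|).subset fun c hc => ⟨?_, ?_⟩
  · nlinarith [hc i, le_abs_self (x i), neg_abs_le (x i)]
  · nlinarith [hc j, le_abs_self (x j), neg_abs_le (x j)]

lemma mem_feas_one_iff (hz : A *ᵥ z = 0) (hgen : ∀ x, A *ᵥ x = 0 → ∃ c : ℤ, x = c • z)
    (hpos : ∃ i, 0 < z i) (hneg : ∃ j, z j < 0) (x : Fin N → ℤ) :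
    A *ᵥ x ∈ feas 1 A ↔ ∃ c : ℤ, ∀ k, 0 ≤ x k + c * z k := by
  have hsol : {y | (∀ i, 0 ≤ y i) ∧ A *ᵥ y = A *ᵥ x} =
      (fun c : ℤ => x + c • z) '' {c | ∀ k, 0 ≤ x k + c * z k} := by
    ext y
    constructor
    · rintro ⟨hy, hyx⟩
      obtain ⟨c, hc⟩ := hgen (y - x) (by rw [Matrix.mulVec_sub, hyx, sub_self])
      rw [sub_eq_iff_eq_add'] at hc
      subst hc
      exact ⟨c, fun k => by simpa using hy k, rfl⟩
    · rintro ⟨c, hc, rfl⟩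
      exact ⟨fun k => by simpa using hc k, by rw [Matrix.mulVec_add, Matrix.mulVec_smul, hz,
        smul_zero, add_zero]⟩
  rw [feas, Set.mem_ofPred_eq, hsol, Nat.one_le_iff_ne_zero, ← Nat.pos_iff_ne_zero,
    Set.ncard_pos ((finite_setOf_forall_nonneg_add_mul x hpos hneg).image _), Set.image_nonempty]
  rfl

end Kernel

section Frobenius

variable {n : ℕ} {A : Matrix (Fin n) (Fin (n + 1)) ℤ} {z : Fin (n + 1) → ℤ}

lemma rmat_mulVec_eq_zero_iff (hA : Function.Surjective (Rmat A).mulVec) (hz0 : z ≠ 0)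
    (hz : A *ᵥ z = 0) (w : Fin (n + 1) → ℝ) : Rmat A *ᵥ w = 0 ↔ ∃ s : ℝ, w = s • Rvec z :=
  (Rmat A).mulVec_eq_zero_iff_exists_smul (by simp) hA
    (fun h => hz0 (rvec_eq_zero_iff.1 h)) (by rw [rmat_mulVec_rvec, hz, rvec_eq_zero_iff]) w

lemma mem_interior_iff_exists_real_shift (hA : Function.Surjective (Rmat A).mulVec)
    (hz0 : z ≠ 0) (hz : A *ᵥ z = 0) (t : ℝ) (x : Fin (n + 1) → ℤ) :
    Rvec (A *ᵥ x) ∈ interior ((fun c => t • vA A + c) '' coneOf A) ↔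
      ∃ s : ℝ, ∀ k, t < x k + s * z k := by
  rw [mem_interior_vadd_coneOf_iff A hA, ← rmat_mulVec_rvec]
  constructor
  · rintro ⟨y, hy, hyx⟩
    obtain ⟨s, hs⟩ := (rmat_mulVec_eq_zero_iff hA hz0 hz (y - Rvec x)).1
      (by rw [Matrix.mulVec_sub, hyx, sub_self])
    refine ⟨s, fun k => ?_⟩
    have := congrFun hs k
    simp only [Pi.sub_apply, Pi.smul_apply, smul_eq_mul, Rvec] at this
    linarith [hy k]
  · rintro ⟨s, hs⟩
    refine ⟨Rvec x + s • Rvec z, hs, ?_⟩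
    rw [Matrix.mulVec_add, (rmat_mulVec_eq_zero_iff hA hz0 hz _).2 ⟨s, rfl⟩, add_zero]

lemma forall_mem_feas_one_iff (hsurj : Function.Surjective A.mulVec) (hz0 : z ≠ 0)
    (hz : A *ᵥ z = 0) (hgen : ∀ x, A *ᵥ x = 0 → ∃ c : ℤ, x = c • z) (hpos : ∃ i, 0 < z i)
    (hneg : ∃ j, z j < 0) (t : ℝ) :
    (∀ b : Fin n → ℤ, Rvec b ∈ interior ((fun c => t • vA A + c) '' coneOf A) → b ∈ feas 1 A) ↔
      ∀ (x : Fin (n + 1) → ℤ) (s : ℝ), (∀ k, t < x k + s * z k) →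
        ∃ c : ℤ, ∀ k, 0 ≤ x k + c * z k := by
  have hA := rmat_mulVec_surjective A hsurj
  constructor
  · intro H x s hs
    exact (mem_feas_one_iff hz hgen hpos hneg x).1
      (H _ ((mem_interior_iff_exists_real_shift hA hz0 hz t x).2 ⟨s, hs⟩))
  · intro H b hb
    obtain ⟨x, rfl⟩ := hsurj b
    obtain ⟨s, hs⟩ := (mem_interior_iff_exists_real_shift hA hz0 hz t x).1 hb
    exact (mem_feas_one_iff hz hgen hpos hneg x).2 (H x s hs)

lemma exists_mem_coneOf_iff (hA : Function.Surjective (Rmat A).mulVec) (hz0 : z ≠ 0)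
    (hz : A *ᵥ z = 0) (p : Fin (n + 1) → ℝ) (γ : ℝ) :
    (∃ c ∈ coneOf A, γ • vA A = c + Rmat A *ᵥ p - vA A) ↔
      ∃ s : ℝ, ∀ k, p k + s * z k ≤ γ + 1 := by
  constructor
  · rintro ⟨_, ⟨w, hw, rfl⟩, hγ⟩
    obtain ⟨s, hs⟩ := (rmat_mulVec_eq_zero_iff hA hz0 hz ((γ + 1) • 1 - p - w)).1 (by
      rw [Matrix.mulVec_sub, Matrix.mulVec_sub, Matrix.mulVec_smul, add_smul, one_smul]
      change γ • vA A + vA A - _ - _ = 0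
      rw [hγ]
      abel)
    refine ⟨s, fun k => ?_⟩
    have := congrFun hs k
    simp only [Pi.sub_apply, Pi.smul_apply, Pi.one_apply, smul_eq_mul, mul_one, Rvec] at this
    linarith [hw k]
  · rintro ⟨s, hs⟩
    refine ⟨Rmat A *ᵥ ((γ + 1) • 1 - p - s • Rvec z), ⟨_, fun k => ?_, rfl⟩, ?_⟩
    · simp only [Pi.sub_apply, Pi.smul_apply, Pi.one_apply, smul_eq_mul, mul_one, Rvec]
      linarith [hs k]
    · rw [Matrix.mulVec_sub, (rmat_mulVec_eq_zero_iff hA hz0 hz _).2 ⟨s, rfl⟩, sub_zero,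
        Matrix.mulVec_sub, Matrix.mulVec_smul, add_smul, one_smul]
      change γ • vA A = γ • vA A + vA A - _ + _ - vA A
      abel

end Frobenius

theorem stmt_16_general {n : ℕ} (A : Matrix (Fin n) (Fin (n + 1)) ℤ)
    (hA : regular A) (z : Fin (n + 1) → ℤ)
    (hzprim : Finset.univ.gcd z = 1)
    (hzker : A.mulVec z = 0)
    (hzgen : ∀ x : Fin (n + 1) → ℤ, A.mulVec x = 0 → ∃ c : ℤ, x = c • z)
    (u : Fin n → ℤ) (hu : u = fun j => ∑ i, if 0 ≤ z i then z i * A j i else 0) :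
    gFrob 1 A = sInf {γ : ℝ | 0 ≤ γ ∧ ∃ c ∈ coneOf A, γ • vA A = c + Rvec u - vA A} := by
  have hsurj := Matrix.mulVec_surjective_of_gcd_det_eq_one hA.1
  have hz0 : z ≠ 0 := by
    rintro rfl
    exact zero_ne_one ((Finset.gcd_eq_zero_iff.2 fun _ _ => rfl).symm.trans hzprim)
  have hpos := exists_pos_of_mulVec_eq_zero hA.2 hz0 hzker
  obtain ⟨j, hj⟩ := exists_pos_of_mulVec_eq_zero hA.2 (neg_ne_zero.2 hz0)
    (by rw [Matrix.mulVec_neg, hzker, neg_zero])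
  subst hu
  rw [gFrob, gDiag, ← rmat_mulVec_posPart]
  congr 1
  ext t
  refine and_congr_right fun ht => ?_
  rw [forall_mem_feas_one_iff hsurj hz0 hzker hzgen hpos ⟨j, neg_pos.1 hj⟩,
    forall_exists_int_shift_iff_pairwiseBound z (by linarith),
    exists_mem_coneOf_iff (rmat_mulVec_surjective A hsurj) hz0 hzker,
    exists_real_shift_iff_pairwiseBound z (by linarith)]

/-- For m = n−1 (here: A with n rows and n+1 columns), g₁(A) is the least γ ≥ 0
with γ·v ∈ C + u − v, where u = Σ_{i : zᵢ ≥ 0} zᵢ aᵢ. -/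
theorem stmt_16 {n : ℕ} (hn : 1 ≤ n) (A : Matrix (Fin n) (Fin (n + 1)) ℤ)
    (hA : regular A) (z : Fin (n + 1) → ℤ)
    (hzprim : Finset.univ.gcd z = 1)
    (hzker : A.mulVec z = 0)
    (hzgen : ∀ x : Fin (n + 1) → ℤ, A.mulVec x = 0 → ∃ c : ℤ, x = c • z)
    (u : Fin n → ℤ) (hu : u = fun j => ∑ i, if 0 ≤ z i then z i * A j i else 0) :
    gFrob 1 A = sInf {γ : ℝ | 0 ≤ γ ∧ ∃ c ∈ coneOf A, γ • vA A = c + Rvec u - vA A} :=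
  stmt_16_general A hA z hzprim hzker hzgen u hu

end
end

section
/- Let k ≥ 1 be an integer and let A ∈ ℤ^{2×4} be the matrix with rows (1, 2, 1, 3k) and (2, 1, 3k, 1). Then there is no x ∈ ℤ^4 with x ≥ 0 componentwise and A x = (9k−4, 6k−3)ᵀ; that is, (9k−4, 6k−3)ᵀ ∉ F_1(A). -/
open scoped BigOperators
open Matrix

noncomputable section

/-- For A = [[1,2,1,3k],[2,1,3k,1]], the vector (9k−4, 6k−3) is not in F₁(A). -/
theorem stmt_17 (k : ℤ) (hk : 1 ≤ k)
    (A : Matrix (Fin 2) (Fin 4) ℤ) (hA : A = !![1, 2, 1, 3 * k; 2, 1, 3 * k, 1]) :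
    ¬ ∃ x : Fin 4 → ℤ, (∀ i, 0 ≤ x i) ∧ A.mulVec x = ![9 * k - 4, 6 * k - 3] := by
  rintro ⟨x, hx, hEq⟩
  have e1 := congrFun hEq 0
  have e2 := congrFun hEq 1
  simp [hA, Matrix.mulVec, dotProduct, Fin.sum_univ_four] at e1 e2
  have h0 := hx 0
  have h1 := hx 1
  have h2 := hx 2
  have h3 := hx 3
  set a := x 0
  set b := x 1
  set c := x 2
  set d := x 3
  have hc : c ≤ 1 := by nlinarith [mul_nonneg (by linarith : (0:ℤ) ≤ 3*k) h2]
  have hd : d ≤ 2 := by nlinarith [mul_nonneg (by linarith : (0:ℤ) ≤ 3*k) h3]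
  interval_cases c <;> interval_cases d <;> omega

end
end

section
/- Let k ≥ 1 be an integer and let A ∈ ℤ^{2×4} be the matrix with rows (1, 2, 1, 3k) and (2, 1, 3k, 1). Then every integer point (x, y) ∈ ℤ² with 3k·x − y ≥ 3(3k−1)² and −x + 3k·y ≥ 2(3k−1)(3k−2), except the point (9k−4, 6k−3), belongs to F_1(A); that is, for every such (x, y) ≠ (9k−4, 6k−3) there exists u ∈ ℤ^4 with u ≥ 0 componentwise and A u = (x, y)ᵀ. -/
open scoped BigOperators
open Matrix

noncomputable section

lemma knap_helper (k x y a b : ℤ) (hk : 1 ≤ k)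
    (ha : 0 ≤ a) (hb : 0 ≤ b)
    (hu : (3*k-2)*a + (6*k-1)*b ≤ 3*k*x - y)
    (hv : (6*k-1)*a + (3*k-2)*b ≤ -x + 3*k*y)
    (hdvd : (9*k^2-1) ∣ (3*k*x - y) - ((3*k-2)*a + (6*k-1)*b)) :
    ∃ u : Fin 4 → ℤ, (∀ i, 0 ≤ u i) ∧
      (!![1, 2, 1, 3*k; 2, 1, 3*k, 1]).mulVec u = ![x, y] := by
  have hM : (0:ℤ) < 9*k^2 - 1 := by nlinarith
  obtain ⟨d, hd⟩ := hdvd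
  have hd0 : 0 ≤ d := by nlinarith [hd, hu, hM]
  set c : ℤ := x - a - 2*b - 3*k*d with hcdef
  have hc : (-x + 3*k*y) - ((6*k-1)*a + (3*k-2)*b) = (9*k^2-1) * c := by
    rw [hcdef]; linear_combination (-(3*k)) * hd
  have hc0 : 0 ≤ c := by nlinarith [hc, hv, hM]
  refine ⟨![a, b, c, d], ?_, ?_⟩
  · intro i; fin_cases i <;> simp [ha, hb, hc0, hd0]
  · have hy : (9*k^2-1) * (2*a + b + 3*k*c + d) = (9*k^2-1) * y := by
      linear_combination -hd - 3*k*hc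
    have hy' : 2*a + b + 3*k*c + d = y := mul_left_cancel₀ hM.ne' hy
    funext i
    fin_cases i <;>
      simp [Matrix.mulVec, dotProduct, Fin.sum_univ_four] <;>
      linarith [hcdef, hy']

set_option maxHeartbeats 1600000 in
/-- For A = [[1,2,1,3k],[2,1,3k,1]], every integer point of the translated cone
(9k−4, 6k−3) + C other than its apex belongs to F₁(A). -/
theorem stmt_18 (k : ℤ) (hk : 1 ≤ k)
    (A : Matrix (Fin 2) (Fin 4) ℤ) (hA : A = !![1, 2, 1, 3 * k; 2, 1, 3 * k, 1])
    (x y : ℤ) (h1 : 3 * k * x - y ≥ 3 * (3 * k - 1) ^ 2)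
    (h2 : -x + 3 * k * y ≥ 2 * (3 * k - 1) * (3 * k - 2))
    (hne : ¬(x = 9 * k - 4 ∧ y = 6 * k - 3)) :
    ∃ u : Fin 4 → ℤ, (∀ i, 0 ≤ u i) ∧ A.mulVec u = ![x, y] := by
  subst hA
  have hM : (0:ℤ) < 9*k^2 - 1 := by nlinarith
  obtain ⟨w, m, hm, hw0, hwM⟩ : ∃ w m : ℤ,
      k*(6*k+1)*x - k*(3*k+2)*y = (9*k^2-1)*m + w ∧ 0 ≤ w ∧ w < 9*k^2-1 :=
    ⟨(k*(6*k+1)*x - k*(3*k+2)*y) % (9*k^2-1),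
     (k*(6*k+1)*x - k*(3*k+2)*y) / (9*k^2-1),
     by rw [Int.emod_def]; ring,
     Int.emod_nonneg _ hM.ne', Int.emod_lt_of_pos _ hM⟩
  by_cases hw3 : w ≤ 3*k - 1
  · -- small w : (a,b) = (0,w)
    apply knap_helper k x y 0 w hk le_rfl hw0
    · nlinarith [h1, mul_nonneg (show (0:ℤ) ≤ 6*k-1 by linarith)
        (show (0:ℤ) ≤ 3*k-1-w by linarith), sq_nonneg (k-1)]
    · nlinarith [h2, mul_nonneg (show (0:ℤ) ≤ 3*k-2 by linarith)
        (show (0:ℤ) ≤ 3*k-1-w by linarith), sq_nonneg (k-1)]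
    · exact ⟨(6*k-1)*m - 4*k*x + (2*k+1)*y, by linear_combination (6*k-1)*hm⟩
  · push_neg at hw3
    by_cases hw4 : w = 6*k - 2
    · -- apex residue class
      subst hw4
      set i : ℤ := (6*k-1)*(m+1) - 4*k*x + (2*k+1)*y - 6*k + 2 with hidef
      have hpP : (3*k*x - y) - (27*k^2 - 18*k + 3) = (9*k^2-1) * i := by
        rw [hidef]; linear_combination (6*k-1)*hm
      set j : ℤ := x - 9*k + 4 - 3*k*i with hjdef
      have hqQ : (-x + 3*k*y) - (18*k^2 - 18*k + 4) = (9*k^2-1) * j := by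
        rw [hjdef]; linear_combination (-(3*k))*hpP
      have hi0 : 0 ≤ i := by nlinarith [hpP, h1, hM]
      have hj0 : 0 ≤ j := by nlinarith [hqQ, h2, hM]
      have hij : 1 ≤ i ∨ 1 ≤ j := by
        by_contra hcon
        push_neg at hcon
        have hi : i = 0 := le_antisymm (by linarith [hcon.1]) hi0
        have hj : j = 0 := le_antisymm (by linarith [hcon.2]) hj0
        rw [hi, mul_zero] at hpP
        rw [hj, mul_zero] at hqQ
        exact hne ⟨mul_left_cancel₀ hM.ne'
            (show (9*k^2-1)*x = (9*k^2-1)*(9*k-4) by linear_combination 3*k*hpP + hqQ),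
          mul_left_cancel₀ hM.ne'
            (show (9*k^2-1)*y = (9*k^2-1)*(6*k-3) by linear_combination hpP + 3*k*hqQ)⟩
      by_cases hj1 : 1 ≤ j
      · apply knap_helper k x y (3*k-1) (3*k-1) hk (by linarith) (by linarith)
        · nlinarith [h1]
        · nlinarith [hqQ, mul_nonneg hM.le (show (0:ℤ) ≤ j - 1 by linarith)]
        · exact ⟨i, by linear_combination hpP⟩
      · have hj : j = 0 := le_antisymm (by linarith) hj0
        have hi1 : 1 ≤ i := by
          rcases hij with h | h
          · exact h
          · exact absurd h hj1
        apply knap_helper k x y 0 (6*k-2) hk le_rfl (by linarith)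
        · nlinarith [hpP, mul_nonneg hM.le (show (0:ℤ) ≤ i - 1 by linarith)]
        · nlinarith [h2]
        · exact ⟨i - 1, by linear_combination hpP⟩
    · -- generic case : 3k ≤ w, w ≠ 6k-2
      have hk3 : (0:ℤ) < 3*k := by linarith
      obtain ⟨a, s, hdiv, hs0, hs3⟩ : ∃ a s : ℤ,
          (9*k^2-1) - w + 3*k - 1 = 3*k*a + s ∧ 0 ≤ s ∧ s < 3*k :=
        ⟨((9*k^2-1) - w + 3*k - 1) / (3*k), ((9*k^2-1) - w + 3*k - 1) % (3*k),
         by rw [Int.emod_def]; ring,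
         Int.emod_nonneg _ hk3.ne', Int.emod_lt_of_pos _ hk3⟩
      obtain ⟨b, hbdef⟩ : ∃ b : ℤ, b = 3*k*a - ((9*k^2-1) - w) := ⟨_, rfl⟩
      have hbs : b = 3*k - 1 - s := by rw [hbdef]; linarith [hdiv]
      have hb0 : 0 ≤ b := by omega
      have hb3 : b ≤ 3*k - 1 := by omega
      have ha1 : 1 ≤ a := by
        have h3ka : 1 ≤ 3*k*a := by omega
        nlinarith [h3ka, hk3]
      have ha3 : a ≤ 3*k - 1 := by
        have h3ka : 3*k*a ≤ 9*k^2 - 2 := by omega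
        nlinarith [h3ka, hk3]
      have hab : a ≤ 3*k-2 ∨ b ≤ 3*k-2 := by
        by_contra hcon
        push_neg at hcon
        have ha' : a = 3*k-1 := le_antisymm ha3 (by linarith [hcon.1])
        have hb' : b = 3*k-1 := le_antisymm hb3 (by linarith [hcon.2])
        apply hw4
        have hbb := hbdef
        rw [ha', hb'] at hbb
        linear_combination -hbb
      have hdd : (3*k*x - y) - ((3*k-2)*a + (6*k-1)*b) =
          (9*k^2-1) * ((6*k-1)*(m+1) - 4*k*x + (2*k+1)*y - 2*a) := by
        linear_combination (6*k-1)*hm - (6*k-1)*hbdef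
      have hu : (3*k-2)*a + (6*k-1)*b ≤ 3*k*x - y := by
        have t1 : (3*k-2)*a ≤ (3*k-2)*(3*k-1) :=
          mul_le_mul_of_nonneg_left ha3 (by linarith)
        have t2 : (6*k-1)*b ≤ (6*k-1)*(3*k-1) :=
          mul_le_mul_of_nonneg_left hb3 (by linarith)
        linarith [t1, t2, h1]
      have hvq : (6*k-1)*a + (3*k-2)*b ≤ 27*k^2 - 21*k + 5 := by
        rcases hab with h | h
        · have t1 : (6*k-1)*a ≤ (6*k-1)*(3*k-2) :=
            mul_le_mul_of_nonneg_left h (by linarith)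
          have t2 : (3*k-2)*b ≤ (3*k-2)*(3*k-1) :=
            mul_le_mul_of_nonneg_left hb3 (by linarith)
          linarith [t1, t2]
        · have t1 : (6*k-1)*a ≤ (6*k-1)*(3*k-1) :=
            mul_le_mul_of_nonneg_left ha3 (by linarith)
          have t2 : (3*k-2)*b ≤ (3*k-2)*(3*k-2) :=
            mul_le_mul_of_nonneg_left h (by linarith)
          linarith [t1, t2]
      obtain ⟨cc, hccdef⟩ : ∃ cc : ℤ,
          cc = x - a - 2*b - 3*k*((6*k-1)*(m+1) - 4*k*x + (2*k+1)*y - 2*a) := ⟨_, rfl⟩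
      have hqv : (-x + 3*k*y) - ((6*k-1)*a + (3*k-2)*b) = (9*k^2-1) * cc := by
        rw [hccdef]; linear_combination (-(3*k))*hdd
      have hcc0 : 0 ≤ cc := by nlinarith [hqv, h2, hvq, hM]
      apply knap_helper k x y a b hk (by linarith) hb0 hu
      · nlinarith [hqv, mul_nonneg hM.le hcc0]
      · exact ⟨_, hdd⟩

end
end
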